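/- arXiv:1706.08019 — 19 statements merged into one kernel-verified Lean document; each statement's English description precedes it below -/
import Mathlib

section
/- Assume G has the 4-cycle chord property. Let r and t be automorphisms of G with r∘r = id, t∘t = id and r∘t = t∘r, and let v be a vertex of G such that v is adjacent to r(v), v is adjacent to t(v), and the four vertices v, r(v), t(v), r(t(v)) are pairwise distinct. Then the four vertices v, r(v), t(v), r(t(v)) are pairwise adjacent in G (they form a clique); in particular v is adjacent to r(t(v)). -/
theorem stmt0 {V : Type*} (G : SimpleGraph V)
    (hchord4 : ∀ w1 w2 w3 w4 : V, G.Adj w1 w2 → G.Adj w2 w3 → G.Adj w3 w4 →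
      G.Adj w4 w1 → w1 ≠ w3 → w2 ≠ w4 → G.Adj w1 w3 ∨ G.Adj w2 w4)
    (r t : G ≃g G)
    (hrr : ∀ z, r (r z) = z) (htt : ∀ z, t (t z) = z)
    (hrt : ∀ z, r (t z) = t (r z))
    (v : V) (hvr : G.Adj v (r v)) (hvt : G.Adj v (t v))
    (hdist : ([v, r v, t v, r (t v)] : List V).Pairwise (· ≠ ·)) :
    G.Adj v (r v) ∧ G.Adj v (t v) ∧ G.Adj v (r (t v)) ∧
      G.Adj (r v) (t v) ∧ G.Adj (r v) (r (t v)) ∧ G.Adj (t v) (r (t v)) := by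
  simp only [List.pairwise_cons, List.mem_cons, List.mem_singleton] at hdist
  obtain ⟨h1, h2, h3⟩ := hdist
  have hne13 : v ≠ t v := h1 _ (Or.inr (Or.inl rfl))
  have hne14 : v ≠ r (t v) := h1 _ (Or.inr (Or.inr (by simp)))
  have hne23 : r v ≠ t v := h2 _ (Or.inl rfl)
  -- r v ~ r (t v)
  have h25 : G.Adj (r v) (r (t v)) := r.map_adj_iff.mpr hvt
  -- t v ~ r (t v) : apply t to hvr, using t (r v) = r (t v)
  have h36 : G.Adj (t v) (r (t v)) := by
    have h := t.map_adj_iff.mpr hvr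
    rw [← hrt] at h
    exact h
  -- 4-cycle v, r v, r(t v), t v
  have hcyc := hchord4 v (r v) (r (t v)) (t v) hvr h25 h36.symm hvt.symm hne14 hne23
  have h13 : G.Adj v (r (t v)) := by
    cases hcyc with
    | inl h => exact h
    | inr h =>
      have h' := r.map_adj_iff.mpr h
      rwa [hrr] at h'
  have h23 : G.Adj (r v) (t v) := by
    cases hcyc with
    | inl h =>
      have := r.map_adj_iff.mpr h
      rw [hrr] at this
      exact this
    | inr h => exact h
  exact ⟨hvr, hvt, h13, h23, h25, h36⟩
end

section
/- Assume G has the 4-cycle chord property. If some two non-consecutive vertices of the 8-cycle O are adjacent in G, then all eight vertices of O are pairwise adjacent in G (O is a clique). -/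
theorem stmt1 {V : Type*} (G : SimpleGraph V)
    (hchord4 : ∀ w1 w2 w3 w4 : V, G.Adj w1 w2 → G.Adj w2 w3 → G.Adj w3 w4 →
      G.Adj w4 w1 → w1 ≠ w3 → w2 ≠ w4 → G.Adj w1 w3 ∨ G.Adj w2 w4)
    (a b : G ≃g G)
    (haa : ∀ z, a (a z) = z) (hbb : ∀ z, b (b z) = z)
    (hab4 : ∀ z : V, a (b (a (b (a (b (a (b (z)))))))) = z)
    (v : V) (hva : G.Adj v (a v)) (hvb : G.Adj v (b v))
    (hdist : ([v, a v, a (b v), a (b (a v)), a (b (a (b v))), a (b (a (b (a v)))), a (b (a (b (a (b v))))), a (b (a (b (a (b (a v))))))] : List V).Pairwise (· ≠ ·))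
    (o : Fin 8 → V) (ho : o = ![v, a v, a (b v), a (b (a v)), a (b (a (b v))), a (b (a (b (a v)))), a (b (a (b (a (b v))))), a (b (a (b (a (b (a v))))))])
    (hdiag : ∃ i j : Fin 8, i ≠ j ∧ j ≠ i + 1 ∧ i ≠ j + 1 ∧ G.Adj (o i) (o j)) :
    ∀ i j : Fin 8, i ≠ j → G.Adj (o i) (o j) := by
  -- word identities
  have hba4 : ∀ z : V, b (a (b (a (b (a (b (a z))))))) = z := by
    intro z
    have h2 : a (b (a (b (a (b (a (b (a z)))))))) = a z := hab4 (a z)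
    have := congrArg a h2
    simp only [haa] at this; exact this
  have h6 : ∀ z, a (b (a (b (a (b z))))) = b (a z) := by
    intro z; have := hab4 (b (a z)); rwa [hbb, haa] at this
  have h6' : ∀ z, b (a (b (a (b (a z))))) = a (b z) := by
    intro z; have := hba4 (a (b z)); simp only [haa, hbb] at this; exact this
  have h5 : ∀ z, a (b (a (b (a z)))) = b (a (b z)) := by
    intro z; have := h6 (b z); rwa [hbb] at this
  have h5' : ∀ z, b (a (b (a (b z)))) = a (b (a z)) := by
    intro z; have := h6' (a z); simp only [haa] at this; exact this
  have h4 : ∀ z, a (b (a (b z))) = b (a (b (a z))) := by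
    intro z; have := h6 (b (a z)); rwa [hbb, haa] at this
  -- entries
  have e0 : o 0 = v := by rw [ho]; rfl
  have e1 : o 1 = a v := by rw [ho]; rfl
  have e2 : o 2 = a (b v) := by rw [ho]; rfl
  have e3 : o 3 = a (b (a v)) := by rw [ho]; rfl
  have e4 : o 4 = a (b (a (b v))) := by rw [ho]; rfl
  have e5 : o 5 = a (b (a (b (a v)))) := by rw [ho]; rfl
  have e6 : o 6 = a (b (a (b (a (b v))))) := by rw [ho]; rfl
  have e7 : o 7 = a (b (a (b (a (b (a v)))))) := by rw [ho]; rfl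
  -- rotation
  have r0 : a (b (o 0)) = o 2 := by rw [e0, e2]
  have r1 : a (b (o 1)) = o 3 := by rw [e1, e3]
  have r2 : a (b (o 2)) = o 4 := by rw [e2, e4]
  have r3 : a (b (o 3)) = o 5 := by rw [e3, e5]
  have r4 : a (b (o 4)) = o 6 := by rw [e4, e6]
  have r5 : a (b (o 5)) = o 7 := by rw [e5, e7]
  have r6 : a (b (o 6)) = o 0 := by rw [e6, e0]; exact hab4 v
  have r7 : a (b (o 7)) = o 1 := by rw [e7, e1]; exact hab4 (a v)
  have hrot : ∀ i : Fin 8, a (b (o i)) = o (i + 2) := by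
    intro i; fin_cases i
    exacts [r0, r1, r2, r3, r4, r5, r6, r7]
  -- reflection
  have f0 : a (o 0) = o 1 := by rw [e0, e1]
  have f1 : a (o 1) = o 0 := by rw [e1, e0]; exact haa v
  have f2 : a (o 2) = o 7 := by rw [e2, e7]; simp only [haa, hbb, h4, h5, h5', h6, h6', hab4]
  have f3 : a (o 3) = o 6 := by rw [e3, e6]; simp only [haa, hbb, h4, h5, h5', h6, h6', hab4]
  have f4 : a (o 4) = o 5 := by rw [e4, e5]; simp only [haa, hbb, h4, h5, h5', h6, h6', hab4]
  have f5 : a (o 5) = o 4 := by rw [e5, e4]; simp only [haa, hbb, h4, h5, h5', h6, h6', hab4]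
  have f6 : a (o 6) = o 3 := by rw [e6, e3]; simp only [haa, hbb, h4, h5, h5', h6, h6', hab4]
  have f7 : a (o 7) = o 2 := by rw [e7, e2]; simp only [haa, hbb, h4, h5, h5', h6, h6', hab4]
  have hrefl : ∀ i : Fin 8, a (o i) = o (1 - i) := by
    intro i; fin_cases i
    exacts [f0, f1, f2, f3, f4, f5, f6, f7]
  -- adjacency transports
  have rot : ∀ {i j : Fin 8}, G.Adj (o i) (o j) → G.Adj (o (i + 2)) (o (j + 2)) := by
    intro i j h
    rw [← hrot i, ← hrot j]
    exact a.map_adj_iff.mpr (b.map_adj_iff.mpr h)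
  have ref : ∀ {i j : Fin 8}, G.Adj (o i) (o j) → G.Adj (o (1 - i)) (o (1 - j)) := by
    intro i j h
    rw [← hrefl i, ← hrefl j]
    exact a.map_adj_iff.mpr h
  -- consecutive adjacency
  have c0 : G.Adj (o 0) (o 1) := by rw [e0, e1]; exact hva
  have c1 : G.Adj (o 1) (o 2) := by rw [e1, e2]; exact a.map_adj_iff.mpr hvb
  have c2 : G.Adj (o 2) (o 3) := rot c0
  have c3 : G.Adj (o 3) (o 4) := rot c1
  have c4 : G.Adj (o 4) (o 5) := rot c2
  have c5 : G.Adj (o 5) (o 6) := rot c3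
  have c6 : G.Adj (o 6) (o 7) := rot c4
  have c7 : G.Adj (o 7) (o 0) := rot c5
  -- distinctness facts
  simp only [List.pairwise_cons, List.mem_cons, List.mem_singleton, List.not_mem_nil,
    forall_eq_or_imp, forall_eq, List.Pairwise.nil, and_true] at hdist
  obtain ⟨⟨d01, d02, d03, d04, d05, d06, d07, -⟩, ⟨d12, d13, d14, d15, d16, d17, -⟩,
    ⟨d23, d24, d25, d26, d27, -⟩, ⟨d34, d35, d36, d37, -⟩, ⟨d45, d46, d47, -⟩,
    ⟨d56, d57, -⟩, ⟨d67, -⟩, -⟩ := hdist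
  have n02 : o 0 ≠ o 2 := by rw [e0, e2]; exact d02
  have n03 : o 0 ≠ o 3 := by rw [e0, e3]; exact d03
  have n04 : o 0 ≠ o 4 := by rw [e0, e4]; exact d04
  have n05 : o 0 ≠ o 5 := by rw [e0, e5]; exact d05
  have n13 : o 1 ≠ o 3 := by rw [e1, e3]; exact d13
  have n14 : o 1 ≠ o 4 := by rw [e1, e4]; exact d14
  have n16 : o 1 ≠ o 6 := by rw [e1, e6]; exact d16
  have n24 : o 2 ≠ o 4 := by rw [e2, e4]; exact d24
  have n26 : o 2 ≠ o 6 := by rw [e2, e6]; exact d26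
  have n27 : o 2 ≠ o 7 := by rw [e2, e7]; exact d27
  -- main clique lemma from a (0,2) chord
  have K2 : G.Adj (o 0) (o 2) → ∀ i j : Fin 8, i ≠ j → G.Adj (o i) (o j) := by
    intro h02
    have h24 : G.Adj (o 2) (o 4) := rot h02
    have h46 : G.Adj (o 4) (o 6) := rot h24
    have h60 : G.Adj (o 6) (o 0) := rot h46
    have h17 : G.Adj (o 1) (o 7) := ref h02
    have h31 : G.Adj (o 3) (o 1) := rot h17
    have h53 : G.Adj (o 5) (o 3) := rot h31
    have h75 : G.Adj (o 7) (o 5) := rot h53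
    have h04 : G.Adj (o 0) (o 4) := by
      rcases hchord4 (o 0) (o 2) (o 4) (o 6) h02 h24 h46 h60 n04 n26 with h | h
      · exact h
      · exact (rot h).symm
    have h26 : G.Adj (o 2) (o 6) := rot h04
    have h15 : G.Adj (o 1) (o 5) := ref h04
    have h37 : G.Adj (o 3) (o 7) := rot h15
    have h03 : G.Adj (o 0) (o 3) := by
      rcases hchord4 (o 0) (o 1) (o 3) (o 4) c0 h31.symm c3 h04.symm n03 n14 with h | h
      · exact h
      · have h36 : G.Adj (o 3) (o 6) := rot h
        rcases hchord4 (o 1) (o 3) (o 6) (o 0) h31.symm h36 h60 c0 n16 n03.symm with h' | h'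
        · exact (rot h').symm
        · exact h'.symm
    have h25 : G.Adj (o 2) (o 5) := rot h03
    have h47 : G.Adj (o 4) (o 7) := rot h25
    have h61 : G.Adj (o 6) (o 1) := rot h47
    have h14 : G.Adj (o 1) (o 4) := by
      rcases hchord4 (o 0) (o 2) (o 5) (o 7) h02 h25 h75.symm c7 n05 n27 with h | h
      · exact (rot (rot h)).symm
      · exact (rot h).symm
    have h36 : G.Adj (o 3) (o 6) := rot h14
    have h50 : G.Adj (o 5) (o 0) := rot h36
    have h72 : G.Adj (o 7) (o 2) := rot h50
    intro i j hij
    fin_cases i <;> fin_cases j <;>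
      first
        | exact absurd rfl hij
        | exact c0 | exact c1 | exact c2 | exact c3 | exact c4 | exact c5 | exact c6 | exact c7
        | exact c0.symm | exact c1.symm | exact c2.symm | exact c3.symm
        | exact c4.symm | exact c5.symm | exact c6.symm | exact c7.symm
        | exact h02 | exact h24 | exact h46 | exact h60 | exact h17 | exact h31 | exact h53 | exact h75
        | exact h02.symm | exact h24.symm | exact h46.symm | exact h60.symm
        | exact h17.symm | exact h31.symm | exact h53.symm | exact h75.symm
        | exact h04 | exact h26 | exact h15 | exact h37
        | exact h04.symm | exact h26.symm | exact h15.symm | exact h37.symm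
        | exact h03 | exact h25 | exact h47 | exact h61 | exact h14 | exact h36 | exact h50 | exact h72
        | exact h03.symm | exact h25.symm | exact h47.symm | exact h61.symm
        | exact h14.symm | exact h36.symm | exact h50.symm | exact h72.symm
  -- normalization: any distance-2 chord yields the (0,2) chord
  have t2 : ∀ i : Fin 8, G.Adj (o i) (o (i + 2)) → G.Adj (o 0) (o 2) := by
    intro i h; fin_cases i
    · exact h
    · exact rot ((ref h).symm)
    · exact rot (rot (rot h))
    · exact rot (rot ((ref h).symm))
    · exact rot (rot h)
    · exact rot (rot (rot ((ref h).symm)))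
    · exact rot h
    · exact (ref h).symm
  -- any distance-3 chord yields the (0,2) chord
  have kA : G.Adj (o 0) (o 3) → G.Adj (o 0) (o 2) := by
    intro h03
    rcases hchord4 (o 0) (o 1) (o 2) (o 3) c0 c1 c2 h03.symm n02 n13 with h | h
    · exact h
    · exact t2 1 h
  have kB : G.Adj (o 1) (o 4) → G.Adj (o 0) (o 2) := by
    intro h14
    rcases hchord4 (o 1) (o 2) (o 3) (o 4) c1 c2 c3 h14.symm n13 n24 with h | h
    · exact t2 1 h
    · exact t2 2 h
  have t3 : ∀ i : Fin 8, G.Adj (o i) (o (i + 3)) → G.Adj (o 0) (o 2) := by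
    intro i h; fin_cases i
    · exact kA h
    · exact kB h
    · exact kA (rot (rot (rot h)))
    · exact kB (rot (rot (rot h)))
    · exact kA (rot (rot h))
    · exact kB (rot (rot h))
    · exact kA (rot h)
    · exact kB (rot h)
  -- any distance-4 chord yields the (0,2) chord
  have k4 : G.Adj (o 0) (o 4) → G.Adj (o 0) (o 2) := by
    intro h04
    have h15 : G.Adj (o 1) (o 5) := ref h04
    rcases hchord4 (o 0) (o 4) (o 5) (o 1) h04 c4 h15.symm c0.symm n05 n14.symm with h | h
    · exact t3 5 h.symm
    · exact t3 1 h.symm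
  have t4 : ∀ i : Fin 8, G.Adj (o i) (o (i + 4)) → G.Adj (o 0) (o 2) := by
    intro i h; fin_cases i
    · exact k4 h
    · exact k4 (ref h)
    · exact k4 ((rot h).symm)
    · exact k4 ((ref (rot h)).symm)
    · exact k4 h.symm
    · exact k4 (ref h.symm)
    · exact k4 ((rot h.symm).symm)
    · exact k4 ((ref (rot h.symm)).symm)
  obtain ⟨i, j, hij1, hij2, hij3, hadjij⟩ := hdiag
  have h02 : G.Adj (o 0) (o 2) := by
    fin_cases i <;> fin_cases j <;>
      first
        | exact absurd rfl hij1
        | exact absurd rfl hij2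
        | exact absurd rfl hij3
        | exact t2 _ hadjij
        | exact t3 _ hadjij
        | exact t4 _ hadjij
        | exact t2 _ hadjij.symm
        | exact t3 _ hadjij.symm
  exact K2 h02
end

section
/- Assume G has the 4-cycle chord property. If v is adjacent to a(b(v)), then v is adjacent to (a∘b)^2(v). -/
theorem stmt2 {V : Type*} (G : SimpleGraph V)
    (hchord4 : ∀ w1 w2 w3 w4 : V, G.Adj w1 w2 → G.Adj w2 w3 → G.Adj w3 w4 →
      G.Adj w4 w1 → w1 ≠ w3 → w2 ≠ w4 → G.Adj w1 w3 ∨ G.Adj w2 w4)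
    (a b : G ≃g G)
    (haa : ∀ z, a (a z) = z) (hbb : ∀ z, b (b z) = z)
    (hab4 : ∀ z : V, a (b (a (b (a (b (a (b (z)))))))) = z)
    (v : V) (hva : G.Adj v (a v)) (hvb : G.Adj v (b v))
    (hdist : ([v, a v, a (b v), a (b (a v)), a (b (a (b v))), a (b (a (b (a v)))), a (b (a (b (a (b v))))), a (b (a (b (a (b (a v))))))] : List V).Pairwise (· ≠ ·))
    (hyp : G.Adj v (a (b v))) :
    G.Adj v (a (b (a (b v)))) := by
  have hA : ∀ x y, G.Adj x y → G.Adj (a x) (a y) := fun x y h => a.map_rel_iff.mpr h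
  have hB : ∀ x y, G.Adj x y → G.Adj (b x) (b y) := fun x y h => b.map_rel_iff.mpr h
  rw [List.pairwise_iff_getElem] at hdist
  have ne13 : v ≠ a (b (a (b v))) := hdist 0 4 (by norm_num) (by norm_num) (by norm_num)
  have ne24 : a (b v) ≠ a (b (a (b (a (b v))))) := hdist 2 6 (by norm_num) (by norm_num) (by norm_num)
  have e2 : G.Adj (a (b v)) (a (b (a (b v)))) := hA _ _ (hB _ _ hyp)
  have e3 : G.Adj (a (b (a (b v)))) (a (b (a (b (a (b v)))))) := hA _ _ (hB _ _ e2)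
  have e4 : G.Adj (a (b (a (b (a (b v)))))) v := by
    have := hA _ _ (hB _ _ e3)
    rwa [hab4] at this
  rcases hchord4 v (a (b v)) (a (b (a (b v)))) (a (b (a (b (a (b v)))))) hyp e2 e3 e4 ne13 ne24 with h | h
  · exact h
  · have := hB _ _ (hA _ _ h)
    simp only [haa, hbb] at this
    exact this
end

section
/- Assume G has the 4-cycle chord property. If v is adjacent to (a∘b)^2(v), then v is adjacent to a(b(a(v))). -/
theorem stmt3 {V : Type*} (G : SimpleGraph V)
    (hchord4 : ∀ w1 w2 w3 w4 : V, G.Adj w1 w2 → G.Adj w2 w3 → G.Adj w3 w4 →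
      G.Adj w4 w1 → w1 ≠ w3 → w2 ≠ w4 → G.Adj w1 w3 ∨ G.Adj w2 w4)
    (a b : G ≃g G)
    (haa : ∀ z, a (a z) = z) (hbb : ∀ z, b (b z) = z)
    (hab4 : ∀ z : V, a (b (a (b (a (b (a (b (z)))))))) = z)
    (v : V) (hva : G.Adj v (a v)) (hvb : G.Adj v (b v))
    (hdist : ([v, a v, a (b v), a (b (a v)), a (b (a (b v))), a (b (a (b (a v)))), a (b (a (b (a (b v))))), a (b (a (b (a (b (a v))))))] : List V).Pairwise (· ≠ ·))
    (hyp : G.Adj v (a (b (a (b v))))) :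
    G.Adj v (a (b (a v))) := by
  have map : ∀ (f : G ≃g G) {x y : V}, G.Adj x y → G.Adj (f x) (f y) :=
    fun f _ _ h => f.map_adj_iff.mpr h
  -- edge (ab)av ~ (ab)² v
  have e23 : G.Adj (a (b (a v))) (a (b (a (b v)))) :=
    map a (map b (map a hvb))
  -- edge (ab)av ~ (ab)³ a v  (which equals b v)
  have e34 : G.Adj (a (b (a v))) (b v) := by
    have := map a (map b (map a hyp))
    rw [haa, hbb, haa] at this
    exact this
  -- b v = (ab)³ a v as terms
  have hbv : b v = a (b (a (b (a (b (a v)))))) := by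
    apply b.injective
    rw [hbb]
    exact (a.injective (hab4 (a v))).symm
  have h03 : v ≠ a (b (a v)) :=
    List.rel_of_pairwise_cons hdist (by simp)
  have h47' : a (b (a (b v))) ≠ a (b (a (b (a (b (a v)))))) :=
    List.rel_of_pairwise_cons (hdist.tail.tail.tail.tail) (by simp)
  have h47 : a (b (a (b v))) ≠ b v := fun h => h47' (h.trans hbv)
  rcases hchord4 v (a (b (a (b v)))) (a (b (a v))) (b v) hyp e23.symm e34
      hvb.symm h03 h47 with h | h
  · exact h
  · -- Adj (abab v) (b v): apply (ab)² to get Adj v (aba v)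
    have := map a (map b (map a (map b h)))
    rw [hab4, hbb] at this
    exact this
end

section
/- Assume G has the 4-cycle chord property. If v is adjacent to (a∘b)^2(v), then v is adjacent to b(a(b(v))). -/
theorem stmt4 {V : Type*} (G : SimpleGraph V)
    (hchord4 : ∀ w1 w2 w3 w4 : V, G.Adj w1 w2 → G.Adj w2 w3 → G.Adj w3 w4 →
      G.Adj w4 w1 → w1 ≠ w3 → w2 ≠ w4 → G.Adj w1 w3 ∨ G.Adj w2 w4)
    (a b : G ≃g G)
    (haa : ∀ z, a (a z) = z) (hbb : ∀ z, b (b z) = z)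
    (hab4 : ∀ z : V, a (b (a (b (a (b (a (b (z)))))))) = z)
    (v : V) (hva : G.Adj v (a v)) (hvb : G.Adj v (b v))
    (hdist : ([v, a v, a (b v), a (b (a v)), a (b (a (b v))), a (b (a (b (a v)))), a (b (a (b (a (b v))))), a (b (a (b (a (b (a v))))))] : List V).Pairwise (· ≠ ·))
    (hyp : G.Adj v (a (b (a (b v))))) :
    G.Adj v (b (a (b v))) := by
  simp only [List.pairwise_cons, List.mem_cons, List.mem_singleton, List.not_mem_nil] at hdist
  -- diagonal 5 ~ 1 : (ab)^2 a v ~ a v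
  have h51 : G.Adj (a (b (a (b (a v))))) (a v) := by
    have h := a.map_adj_iff.mpr (b.map_adj_iff.mpr (a.map_adj_iff.mpr
      (b.map_adj_iff.mpr (a.map_adj_iff.mpr hyp))))
    simpa only [haa, hbb] using h
  -- edge 5 ~ 4 : (ab)^2 a v ~ (ab)^2 v
  have h54 : G.Adj (a (b (a (b (a v))))) (a (b (a (b v)))) := by
    have h := a.map_adj_iff.mpr (b.map_adj_iff.mpr (a.map_adj_iff.mpr
      (b.map_adj_iff.mpr (a.map_adj_iff.mpr hva))))
    simpa only [haa, hbb] using h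
  have hne05 : v ≠ a (b (a (b (a v)))) := hdist.1 _ (by tauto)
  have hne14 : a v ≠ a (b (a (b v))) := hdist.2.1 _ (by tauto)
  have := hchord4 v (a v) (a (b (a (b (a v))))) (a (b (a (b v))))
    hva h51.symm h54 hyp.symm hne05 hne14
  rcases this with h | h
  · -- v ~ (ab)^2 a v ; apply (ab)^2 then a
    have h2 := a.map_adj_iff.mpr (a.map_adj_iff.mpr (b.map_adj_iff.mpr
      (a.map_adj_iff.mpr (b.map_adj_iff.mpr h))))
    -- h2 : a(ab)^2 v ~ a(ab)^2 (ab)^2 a v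
    simp only [haa, hbb, hab4] at h2
    exact h2.symm
  · -- a v ~ (ab)^2 v ; apply a
    have h2 := a.map_adj_iff.mpr h
    simpa only [haa] using h2
end

section
/- Assume G has the 4-cycle chord property. If v is adjacent to a(b(a(v))), then v is adjacent to a(b(v)). -/
theorem stmt5 {V : Type*} (G : SimpleGraph V)
    (hchord4 : ∀ w1 w2 w3 w4 : V, G.Adj w1 w2 → G.Adj w2 w3 → G.Adj w3 w4 →
      G.Adj w4 w1 → w1 ≠ w3 → w2 ≠ w4 → G.Adj w1 w3 ∨ G.Adj w2 w4)
    (a b : G ≃g G)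
    (haa : ∀ z, a (a z) = z) (hbb : ∀ z, b (b z) = z)
    (hab4 : ∀ z : V, a (b (a (b (a (b (a (b (z)))))))) = z)
    (v : V) (hva : G.Adj v (a v)) (hvb : G.Adj v (b v))
    (hdist : ([v, a v, a (b v), a (b (a v)), a (b (a (b v))), a (b (a (b (a v)))), a (b (a (b (a (b v))))), a (b (a (b (a (b (a v))))))] : List V).Pairwise (· ≠ ·))
    (hyp : G.Adj v (a (b (a v)))) :
    G.Adj v (a (b v)) := by
  simp only [List.pairwise_cons, List.mem_cons, List.not_mem_nil, or_false, List.mem_singleton,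
    forall_eq_or_imp, forall_eq] at hdist
  have h13 : v ≠ a (b v) := by tauto
  have h24 : a v ≠ a (b (a v)) := by tauto
  have h2 : G.Adj (a v) (a (b v)) := a.map_adj_iff.mpr hvb
  have h3 : G.Adj (a (b v)) (a (b (a v))) := a.map_adj_iff.mpr (b.map_adj_iff.mpr hva)
  rcases hchord4 v (a v) (a (b v)) (a (b (a v))) hva h2 h3 hyp.symm h13 h24 with h | h
  · exact h
  · -- a v ~ a b a v ⇒ v ~ b a v ⇒ b v ~ a v ⇒ a b v ~ v
    have h1 : G.Adj v (b (a v)) := a.map_adj_iff.mp h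
    have h2' : G.Adj (b v) (a v) := by
      have := b.map_adj_iff.mpr h1
      rwa [hbb] at this
    have := a.map_adj_iff.mpr h2'
    rw [haa] at this
    exact this.symm
end

section
/- Assume G has the 4-cycle chord property. If v is adjacent to b(a(b(v))), then v is adjacent to a(b(v)). -/
theorem stmt6 {V : Type*} (G : SimpleGraph V)
    (hchord4 : ∀ w1 w2 w3 w4 : V, G.Adj w1 w2 → G.Adj w2 w3 → G.Adj w3 w4 →
      G.Adj w4 w1 → w1 ≠ w3 → w2 ≠ w4 → G.Adj w1 w3 ∨ G.Adj w2 w4)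
    (a b : G ≃g G)
    (haa : ∀ z, a (a z) = z) (hbb : ∀ z, b (b z) = z)
    (hab4 : ∀ z : V, a (b (a (b (a (b (a (b (z)))))))) = z)
    (v : V) (hva : G.Adj v (a v)) (hvb : G.Adj v (b v))
    (hdist : ([v, a v, a (b v), a (b (a v)), a (b (a (b v))), a (b (a (b (a v)))), a (b (a (b (a (b v))))), a (b (a (b (a (b (a v))))))] : List V).Pairwise (· ≠ ·))
    (hyp : G.Adj v (b (a (b v)))) :
    G.Adj v (a (b v)) := by
  simp only [List.pairwise_cons, List.mem_cons, List.mem_singleton, List.not_mem_nil] at hdist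
  -- key : b (a v) = (ab)^3 v
  have key : b (a v) = a (b (a (b (a (b v))))) := by
    conv_lhs => rw [← hab4 v]
    rw [haa, hbb]
  have ne1 : v ≠ b (a v) := by
    rw [key]
    exact hdist.1 _ (by simp)
  have ne2 : b v ≠ b (a (b v)) := by
    intro h
    have := b.injective h
    exact hdist.1 _ (by simp) this
  have e2 : G.Adj (b v) (b (a v)) := b.map_rel_iff.mpr hva
  have e3 : G.Adj (b (a v)) (b (a (b v))) := b.map_rel_iff.mpr (a.map_rel_iff.mpr hvb)
  rcases hchord4 v (b v) (b (a v)) (b (a (b v))) hvb e2 e3 hyp.symm ne1 ne2 with h | h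
  · -- v adj (ab)^3 v  ⇒ apply ab
    rw [key] at h
    have h2 : G.Adj (a (b v)) (a (b (a (b (a (b (a (b v)))))))) :=
      a.map_rel_iff.mpr (b.map_rel_iff.mpr h)
    rw [hab4] at h2
    exact h2.symm
  · exact b.map_rel_iff.mp h
end

section
/- Assume G has the 4-cycle chord property and the 5-cycle chord property. If some two non-consecutive vertices of the 10-cycle O are adjacent in G, then all ten vertices of O are pairwise adjacent in G (O is a clique). -/
/-!
Label the vertices of `O` by `ℤ/10` in the given order. Since `a`, `b` are involutions and
`(ab)^5 = 1`, they act on `O` as the reflections `i ↦ 1 - i` and `i ↦ -1 - i`, so the graph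
`G` induces on `O` is invariant under the dihedral group they generate: rotations by an even
number of steps and the reflections `i ↦ c - i` with `c` odd. Every pair of vertices of `O` is
then equivalent to `{0, d}` for some `d ∈ {1, 2, 3, 4, 5, 7, 9}` (at odd distance the even
endpoint can lie on either side). A handful of chorded 4- and 5-cycles through these
representatives shows that any diagonal forces `{0, 2}`, and `{0, 2}` forces `{0, 4}`, then
`{0, 5}`, then `{0, 3}` and `{0, 7}`.
-/

open Function

namespace SimpleGraph

variable {V W : Type*}

def HasFourCycleChords (G : SimpleGraph V) : Prop :=
  ∀ w1 w2 w3 w4 : V, G.Adj w1 w2 → G.Adj w2 w3 → G.Adj w3 w4 →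
    G.Adj w4 w1 → w1 ≠ w3 → w2 ≠ w4 → G.Adj w1 w3 ∨ G.Adj w2 w4

def HasFiveCycleChords (G : SimpleGraph V) : Prop :=
  ∀ w1 w2 w3 w4 w5 : V, ([w1, w2, w3, w4, w5] : List V).Pairwise (· ≠ ·) →
    G.Adj w1 w2 → G.Adj w2 w3 → G.Adj w3 w4 → G.Adj w4 w5 → G.Adj w5 w1 →
    G.Adj w1 w3 ∨ G.Adj w2 w4 ∨ G.Adj w3 w5 ∨ G.Adj w4 w1 ∨ G.Adj w5 w2

theorem HasFourCycleChords.comap {G : SimpleGraph V} {f : W → V} (hf : Injective f)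
    (hG : G.HasFourCycleChords) : (G.comap f).HasFourCycleChords :=
  fun _ _ _ _ h12 h23 h34 h41 h13 h24 => hG _ _ _ _ h12 h23 h34 h41 (hf.ne h13) (hf.ne h24)

theorem HasFiveCycleChords.comap {G : SimpleGraph V} {f : W → V} (hf : Injective f)
    (hG : G.HasFiveCycleChords) : (G.comap f).HasFiveCycleChords :=
  fun _ _ _ _ _ hw => hG _ _ _ _ _ (hw.map f fun _ _ => hf.ne)

end SimpleGraph

section Reflections

open Fin.CommRing

variable {α : Type*} {n : ℕ} [NeZero n] {a b : α → α} {o : Fin n → α}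

theorem apply_eq_one_sub_of_add_two (ha : Involutive a) (hb : Involutive b)
    (hrot : ∀ i, o (i + 2) = a (b (o i))) (h01 : a (o 0) = o 1) (i : Fin n) :
    a (o i) = o (1 - i) := by
  suffices ∀ k : ℕ, a (o k) = o (1 - k) by simpa using this i
  intro k
  induction k using Nat.twoStepInduction with
  | zero => simpa using h01
  | one => simp [← h01, ha _]
  | more k ih _ =>
    have hbk : b (o k) = o (-1 - k) := by
      refine hb.eq_iff.mpr (ha.injective ?_)
      rw [ih, ← hrot]
      ring_nf
    push_cast
    rw [hrot, ha, hbk]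
    ring_nf

theorem apply_eq_neg_one_sub_of_add_two (ha : Involutive a) (hb : Involutive b)
    (hrot : ∀ i, o (i + 2) = a (b (o i))) (h01 : a (o 0) = o 1) (i : Fin n) :
    b (o i) = o (-1 - i) := by
  rw [← ha (b (o i)), ← hrot, apply_eq_one_sub_of_add_two ha hb hrot h01]
  ring_nf

end Reflections

/-- The maps `i ↦ i + 2k` and `i ↦ 1 - i + 2k` form the group generated by `i ↦ 1 - i` and
`i ↦ -1 - i`; bounding `k` makes the relation decidable. -/
def DihedralImage (e e' : Sym2 (Fin 10)) : Prop :=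
  ∃ k < 5, e' = e.map (· + 2)^[k] ∨ e' = e.map ((· + 2)^[k] ∘ (1 - ·))

instance : DecidableRel DihedralImage := fun _ _ => by
  unfold DihedralImage; infer_instance

/-- Models the graph induced on `O`, vertex `i` standing for the `i`-th vertex of `O`, with the
fields `adj_one_sub` and `adj_neg_one_sub` coming from `a` and `b`. -/
structure IsDihedralDecagon (H : SimpleGraph (Fin 10)) : Prop where
  adj_zero_one : H.Adj 0 1
  adj_zero_nine : H.Adj 0 9
  adj_one_sub {i j : Fin 10} : H.Adj i j → H.Adj (1 - i) (1 - j)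
  adj_neg_one_sub {i j : Fin 10} : H.Adj i j → H.Adj (-1 - i) (-1 - j)

namespace IsDihedralDecagon

variable {H : SimpleGraph (Fin 10)}

theorem adj_add_two (hH : IsDihedralDecagon H) {i j : Fin 10} (h : H.Adj i j) :
    H.Adj (i + 2) (j + 2) := by
  have e : ∀ x : Fin 10, 1 - (-1 - x) = x + 2 := by decide
  simpa only [e] using hH.adj_one_sub (hH.adj_neg_one_sub h)

theorem adj_iterate_add_two (hH : IsDihedralDecagon H) (k : ℕ) {i j : Fin 10}
    (h : H.Adj i j) : H.Adj ((· + 2)^[k] i) ((· + 2)^[k] j) := by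
  induction k with
  | zero => exact h
  | succ k ih => simpa only [iterate_succ_apply'] using hH.adj_add_two ih

theorem adj_of_dihedralImage (hH : IsDihedralDecagon H) {i j i' j' : Fin 10} (h : H.Adj i j)
    (he : DihedralImage s(i, j) s(i', j') := by decide) : H.Adj i' j' := by
  obtain ⟨k, -, he | he⟩ := he <;> rw [Sym2.map_mk, Sym2.eq_iff] at he <;>
    rcases he with ⟨rfl, rfl⟩ | ⟨rfl, rfl⟩
  · exact hH.adj_iterate_add_two k h
  · exact (hH.adj_iterate_add_two k h).symm
  · exact hH.adj_iterate_add_two k (hH.adj_one_sub h)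
  · exact (hH.adj_iterate_add_two k (hH.adj_one_sub h)).symm

theorem adj_succ (hH : IsDihedralDecagon H) (i : Fin 10) : H.Adj i (i + 1) := by
  fin_cases i <;> first
    | exact hH.adj_of_dihedralImage hH.adj_zero_one
    | exact hH.adj_of_dihedralImage hH.adj_zero_nine

theorem adj_zero_four_of_adj_zero_two (hH : IsDihedralDecagon H) (h5 : H.HasFiveCycleChords)
    (h02 : H.Adj 0 2) : H.Adj 0 4 := by
  rcases h5 0 2 4 6 8 (by decide) h02 (hH.adj_of_dihedralImage h02)
      (hH.adj_of_dihedralImage h02) (hH.adj_of_dihedralImage h02)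
      (hH.adj_of_dihedralImage h02) with h | h | h | h | h <;>
    exact hH.adj_of_dihedralImage h

theorem adj_zero_two_of_adj_zero_four (hH : IsDihedralDecagon H) (h5 : H.HasFiveCycleChords)
    (h04 : H.Adj 0 4) : H.Adj 0 2 := by
  rcases h5 0 4 8 2 6 (by decide) h04 (hH.adj_of_dihedralImage h04)
      (hH.adj_of_dihedralImage h04) (hH.adj_of_dihedralImage h04)
      (hH.adj_of_dihedralImage h04) with h | h | h | h | h <;>
    exact hH.adj_of_dihedralImage h

theorem adj_zero_two_of_adj_zero_three (hH : IsDihedralDecagon H) (h4 : H.HasFourCycleChords)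
    (h03 : H.Adj 0 3) : H.Adj 0 2 := by
  rcases h4 0 1 2 3 (hH.adj_succ 0) (hH.adj_succ 1) (hH.adj_succ 2)
      (hH.adj_of_dihedralImage h03) (by decide) (by decide) with h | h <;>
    exact hH.adj_of_dihedralImage h

theorem adj_zero_two_of_adj_zero_seven (hH : IsDihedralDecagon H) (h4 : H.HasFourCycleChords)
    (h07 : H.Adj 0 7) : H.Adj 0 2 := by
  rcases h4 0 7 8 9 h07 (hH.adj_succ 7) (hH.adj_succ 8) (hH.adj_succ 9)
      (by decide) (by decide) with h | h <;>
    exact hH.adj_of_dihedralImage h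

theorem adj_zero_four_of_adj_zero_five (hH : IsDihedralDecagon H) (h4 : H.HasFourCycleChords)
    (h05 : H.Adj 0 5) : H.Adj 0 4 := by
  rcases h4 0 5 6 1 h05 (hH.adj_succ 5) (hH.adj_of_dihedralImage h05) (hH.adj_succ 0).symm
      (by decide) (by decide) with h | h <;>
    exact hH.adj_of_dihedralImage h

theorem adj_zero_three_or_adj_zero_seven (hH : IsDihedralDecagon H) (h4 : H.HasFourCycleChords)
    (h02 : H.Adj 0 2) (h04 : H.Adj 0 4) : H.Adj 0 3 ∨ H.Adj 0 7 :=
  (h4 0 1 3 4 (hH.adj_succ 0) (hH.adj_of_dihedralImage h02) (hH.adj_succ 3)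
    (hH.adj_of_dihedralImage h04) (by decide) (by decide)).imp id
    (hH.adj_of_dihedralImage ·)

theorem adj_zero_five_or_adj_zero_seven_of_adj_zero_three (hH : IsDihedralDecagon H)
    (h4 : H.HasFourCycleChords) (h02 : H.Adj 0 2) (h04 : H.Adj 0 4) (h03 : H.Adj 0 3) :
    H.Adj 0 5 ∨ H.Adj 0 7 :=
  (h4 0 2 5 9 h02 (hH.adj_of_dihedralImage h03) (hH.adj_of_dihedralImage h04) (hH.adj_succ 9)
    (by decide) (by decide)).imp id (hH.adj_of_dihedralImage ·)

theorem adj_zero_five_or_adj_zero_three_of_adj_zero_seven (hH : IsDihedralDecagon H)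
    (h4 : H.HasFourCycleChords) (h02 : H.Adj 0 2) (h04 : H.Adj 0 4) (h07 : H.Adj 0 7) :
    H.Adj 0 5 ∨ H.Adj 0 3 :=
  (h4 1 3 6 0 (hH.adj_of_dihedralImage h02) (hH.adj_of_dihedralImage h07)
    (hH.adj_of_dihedralImage h04) (hH.adj_succ 0) (by decide) (by decide)).imp
    (hH.adj_of_dihedralImage ·) (hH.adj_of_dihedralImage ·)

theorem adj_zero_five_of_adj_zero_three_of_adj_zero_seven (hH : IsDihedralDecagon H)
    (h4 : H.HasFourCycleChords) (h02 : H.Adj 0 2) (h03 : H.Adj 0 3) (h07 : H.Adj 0 7) :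
    H.Adj 0 5 := by
  rcases h4 0 2 5 7 h02 (hH.adj_of_dihedralImage h03) (hH.adj_of_dihedralImage h02)
      (hH.adj_of_dihedralImage h07) (by decide) (by decide) with h | h <;>
    exact hH.adj_of_dihedralImage h

theorem adj_zero_three_of_adj_zero_five (hH : IsDihedralDecagon H) (h4 : H.HasFourCycleChords)
    (h02 : H.Adj 0 2) (h05 : H.Adj 0 5) : H.Adj 0 3 := by
  rcases h4 2 4 5 7 (hH.adj_of_dihedralImage h02) (hH.adj_succ 4) (hH.adj_of_dihedralImage h02)
      (hH.adj_of_dihedralImage h05) (by decide) (by decide) with h | h <;>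
    exact hH.adj_of_dihedralImage h

theorem adj_zero_seven_of_adj_zero_five (hH : IsDihedralDecagon H) (h4 : H.HasFourCycleChords)
    (h02 : H.Adj 0 2) (h05 : H.Adj 0 5) : H.Adj 0 7 := by
  rcases h4 1 3 4 6 (hH.adj_of_dihedralImage h02) (hH.adj_succ 3) (hH.adj_of_dihedralImage h02)
      (hH.adj_of_dihedralImage h05) (by decide) (by decide) with h | h <;>
    exact hH.adj_of_dihedralImage h

theorem eq_top_of_adj (hH : IsDihedralDecagon H) (h02 : H.Adj 0 2) (h03 : H.Adj 0 3)
    (h04 : H.Adj 0 4) (h05 : H.Adj 0 5) (h07 : H.Adj 0 7) : H = ⊤ := by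
  have hrep : ∀ i j : Fin 10, i ≠ j → ∃ d ∈ ({1, 2, 3, 4, 5, 7, 9} : Finset (Fin 10)),
      DihedralImage s(0, d) s(i, j) := by
    decide
  ext i j
  refine ⟨SimpleGraph.Adj.ne, fun hij => ?_⟩
  obtain ⟨d, hd, hdij⟩ := hrep i j hij
  simp only [Finset.mem_insert, Finset.mem_singleton] at hd
  have h01 := hH.adj_zero_one
  have h09 := hH.adj_zero_nine
  rcases hd with rfl | rfl | rfl | rfl | rfl | rfl | rfl <;>
    exact hH.adj_of_dihedralImage (by assumption) hdij

theorem eq_top_of_adj_zero_two (hH : IsDihedralDecagon H) (h4 : H.HasFourCycleChords)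
    (h5 : H.HasFiveCycleChords) (h02 : H.Adj 0 2) : H = ⊤ := by
  have h04 := hH.adj_zero_four_of_adj_zero_two h5 h02
  have h05 : H.Adj 0 5 := by
    rcases hH.adj_zero_three_or_adj_zero_seven h4 h02 h04 with h03 | h07
    · exact (hH.adj_zero_five_or_adj_zero_seven_of_adj_zero_three h4 h02 h04 h03).elim id
        (hH.adj_zero_five_of_adj_zero_three_of_adj_zero_seven h4 h02 h03)
    · exact (hH.adj_zero_five_or_adj_zero_three_of_adj_zero_seven h4 h02 h04 h07).elim id
        (hH.adj_zero_five_of_adj_zero_three_of_adj_zero_seven h4 h02 · h07)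
  exact hH.eq_top_of_adj h02 (hH.adj_zero_three_of_adj_zero_five h4 h02 h05) h04 h05
    (hH.adj_zero_seven_of_adj_zero_five h4 h02 h05)

theorem eq_top (hH : IsDihedralDecagon H) (h4 : H.HasFourCycleChords) (h5 : H.HasFiveCycleChords)
    (hdiag : ∃ i j : Fin 10, i ≠ j ∧ j ≠ i + 1 ∧ i ≠ j + 1 ∧ H.Adj i j) :
    H = ⊤ := by
  have hrep : ∀ i j : Fin 10, i ≠ j → j ≠ i + 1 → i ≠ j + 1 →
      ∃ d ∈ ({2, 3, 4, 5, 7} : Finset (Fin 10)), DihedralImage s(i, j) s(0, d) := by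
    decide
  obtain ⟨i, j, hij, hji, hij', h⟩ := hdiag
  obtain ⟨d, hd, hdij⟩ := hrep i j hij hji hij'
  have h0d := hH.adj_of_dihedralImage h hdij
  refine hH.eq_top_of_adj_zero_two h4 h5 ?_
  simp only [Finset.mem_insert, Finset.mem_singleton] at hd
  rcases hd with rfl | rfl | rfl | rfl | rfl
  · exact h0d
  · exact hH.adj_zero_two_of_adj_zero_three h4 h0d
  · exact hH.adj_zero_two_of_adj_zero_four h5 h0d
  · exact hH.adj_zero_two_of_adj_zero_four h5 (hH.adj_zero_four_of_adj_zero_five h4 h0d)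
  · exact hH.adj_zero_two_of_adj_zero_seven h4 h0d

end IsDihedralDecagon

theorem isDihedralDecagon_comap {V : Type*} {G : SimpleGraph V} {a b : G ≃g G}
    (ha : Involutive a) (hb : Involutive b) {o : Fin 10 → V}
    (hrot : ∀ i, o (i + 2) = a (b (o i))) (h01 : a (o 0) = o 1)
    (hadj : G.Adj (o 0) (o 1)) (hadj' : G.Adj (o 0) (b (o 0))) :
    IsDihedralDecagon (G.comap o) where
  adj_zero_one := hadj
  adj_zero_nine := by
    rwa [apply_eq_neg_one_sub_of_add_two ha hb hrot h01] at hadj'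
  adj_one_sub h := by
    simpa only [SimpleGraph.comap_adj, apply_eq_one_sub_of_add_two ha hb hrot h01] using
      a.map_adj_iff.mpr h
  adj_neg_one_sub h := by
    simpa only [SimpleGraph.comap_adj, apply_eq_neg_one_sub_of_add_two ha hb hrot h01] using
      b.map_adj_iff.mpr h

theorem stmt7 {V : Type*} (G : SimpleGraph V)
    (hchord4 : ∀ w1 w2 w3 w4 : V, G.Adj w1 w2 → G.Adj w2 w3 → G.Adj w3 w4 →
      G.Adj w4 w1 → w1 ≠ w3 → w2 ≠ w4 → G.Adj w1 w3 ∨ G.Adj w2 w4)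
    (hchord5 : ∀ w1 w2 w3 w4 w5 : V,
      ([w1, w2, w3, w4, w5] : List V).Pairwise (· ≠ ·) →
      G.Adj w1 w2 → G.Adj w2 w3 → G.Adj w3 w4 → G.Adj w4 w5 → G.Adj w5 w1 →
      G.Adj w1 w3 ∨ G.Adj w2 w4 ∨ G.Adj w3 w5 ∨ G.Adj w4 w1 ∨ G.Adj w5 w2)
    (a b : G ≃g G)
    (haa : ∀ z, a (a z) = z) (hbb : ∀ z, b (b z) = z)
    (hab5 : ∀ z : V, a (b (a (b (a (b (a (b (a (b (z)))))))))) = z)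
    (v : V) (hva : G.Adj v (a v)) (hvb : G.Adj v (b v))
    (hdist : ([v, a v, a (b v), a (b (a v)), a (b (a (b v))), a (b (a (b (a v)))), a (b (a (b (a (b v))))), a (b (a (b (a (b (a v)))))), a (b (a (b (a (b (a (b v))))))), a (b (a (b (a (b (a (b (a v))))))))] : List V).Pairwise (· ≠ ·))
    (o : Fin 10 → V) (ho : o = ![v, a v, a (b v), a (b (a v)), a (b (a (b v))), a (b (a (b (a v)))), a (b (a (b (a (b v))))), a (b (a (b (a (b (a v)))))), a (b (a (b (a (b (a (b v))))))), a (b (a (b (a (b (a (b (a v))))))))])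
    (hdiag : ∃ i j : Fin 10, i ≠ j ∧ j ≠ i + 1 ∧ i ≠ j + 1 ∧ G.Adj (o i) (o j)) :
    ∀ i j : Fin 10, i ≠ j → G.Adj (o i) (o j) := by
  have hinj : Injective o := by
    subst ho
    exact List.nodup_ofFn.mp hdist
  have hrot : ∀ i, o (i + 2) = a (b (o i)) := by
    subst ho
    intro i
    fin_cases i <;> first | rfl | exact (hab5 _).symm
  have hH : IsDihedralDecagon (G.comap o) :=
    isDihedralDecagon_comap haa hbb hrot (by rw [ho]; rfl) (by subst ho; exact hva)
      (by subst ho; exact hvb)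
  have htop := hH.eq_top (.comap hinj hchord4) (.comap hinj hchord5) hdiag
  intro i j hij
  change (G.comap o).Adj i j
  rw [htop]
  exact hij
end

section
/- Assume G has the 4-cycle chord property and the 5-cycle chord property. If v is adjacent to a(b(a(v))), then v is adjacent to a(b(v)). -/
theorem stmt8 {V : Type*} (G : SimpleGraph V)
    (hchord4 : ∀ w1 w2 w3 w4 : V, G.Adj w1 w2 → G.Adj w2 w3 → G.Adj w3 w4 →
      G.Adj w4 w1 → w1 ≠ w3 → w2 ≠ w4 → G.Adj w1 w3 ∨ G.Adj w2 w4)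
    (hchord5 : ∀ w1 w2 w3 w4 w5 : V,
      ([w1, w2, w3, w4, w5] : List V).Pairwise (· ≠ ·) →
      G.Adj w1 w2 → G.Adj w2 w3 → G.Adj w3 w4 → G.Adj w4 w5 → G.Adj w5 w1 →
      G.Adj w1 w3 ∨ G.Adj w2 w4 ∨ G.Adj w3 w5 ∨ G.Adj w4 w1 ∨ G.Adj w5 w2)
    (a b : G ≃g G)
    (haa : ∀ z, a (a z) = z) (hbb : ∀ z, b (b z) = z)
    (hab5 : ∀ z : V, a (b (a (b (a (b (a (b (a (b (z)))))))))) = z)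
    (v : V) (hva : G.Adj v (a v)) (hvb : G.Adj v (b v))
    (hdist : ([v, a v, a (b v), a (b (a v)), a (b (a (b v))), a (b (a (b (a v)))), a (b (a (b (a (b v))))), a (b (a (b (a (b (a v)))))), a (b (a (b (a (b (a (b v))))))), a (b (a (b (a (b (a (b (a v))))))))] : List V).Pairwise (· ≠ ·))
    (hyp : G.Adj v (a (b (a v)))) :
    G.Adj v (a (b v)) := by
  simp only [List.pairwise_cons, List.mem_cons, List.mem_singleton, List.not_mem_nil] at hdist
  have ne02 : v ≠ a (b v) := hdist.1 (a (b v)) (by simp)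
  have ne13 : a v ≠ a (b (a v)) := hdist.2.1 (a (b (a v))) (by simp)
  have h12 : G.Adj (a v) (a (b v)) := a.map_adj_iff.mpr hvb
  have h23 : G.Adj (a (b v)) (a (b (a v))) := a.map_adj_iff.mpr (b.map_adj_iff.mpr hva)
  rcases hchord4 v (a v) (a (b v)) (a (b (a v))) hva h12 h23 hyp.symm ne02 ne13 with h | h
  · exact h
  · -- a v ~ a b a v ⇒ v ~ b a v ⇒ b v ~ a v ⇒ a b v ~ v
    have h1 : G.Adj v (b (a v)) := a.map_adj_iff.mp h
    have h2 : G.Adj (b v) (a v) := by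
      have := b.map_adj_iff.mpr h1
      rwa [hbb] at this
    have h3 : G.Adj (a (b v)) v := by
      have := a.map_adj_iff.mpr h2
      rwa [haa] at this
    exact h3.symm
end

section
/- Assume G has the 4-cycle chord property and the 5-cycle chord property. If v is adjacent to b(a(b(v))), then v is adjacent to a(b(v)). -/
theorem stmt9 {V : Type*} (G : SimpleGraph V)
    (hchord4 : ∀ w1 w2 w3 w4 : V, G.Adj w1 w2 → G.Adj w2 w3 → G.Adj w3 w4 →
      G.Adj w4 w1 → w1 ≠ w3 → w2 ≠ w4 → G.Adj w1 w3 ∨ G.Adj w2 w4)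
    (hchord5 : ∀ w1 w2 w3 w4 w5 : V,
      ([w1, w2, w3, w4, w5] : List V).Pairwise (· ≠ ·) →
      G.Adj w1 w2 → G.Adj w2 w3 → G.Adj w3 w4 → G.Adj w4 w5 → G.Adj w5 w1 →
      G.Adj w1 w3 ∨ G.Adj w2 w4 ∨ G.Adj w3 w5 ∨ G.Adj w4 w1 ∨ G.Adj w5 w2)
    (a b : G ≃g G)
    (haa : ∀ z, a (a z) = z) (hbb : ∀ z, b (b z) = z)
    (hab5 : ∀ z : V, a (b (a (b (a (b (a (b (a (b (z)))))))))) = z)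
    (v : V) (hva : G.Adj v (a v)) (hvb : G.Adj v (b v))
    (hdist : ([v, a v, a (b v), a (b (a v)), a (b (a (b v))), a (b (a (b (a v)))), a (b (a (b (a (b v))))), a (b (a (b (a (b (a v)))))), a (b (a (b (a (b (a (b v))))))), a (b (a (b (a (b (a (b (a v))))))))] : List V).Pairwise (· ≠ ·))
    (hyp : G.Adj v (b (a (b v)))) :
    G.Adj v (a (b v)) := by
  have h1 : G.Adj (b v) (a (b v)) := by
    have := b.map_adj_iff.mpr hyp
    rwa [hbb] at this
  have hne : v ≠ a (b v) := by
    have h := (List.pairwise_cons.mp hdist).1 (a (b v))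
    exact h (by simp)
  have hne2 : b v ≠ a v := by
    intro h
    apply hne
    rw [h, haa]
  have h3 : G.Adj (a (b v)) (a v) := a.map_adj_iff.mpr hvb.symm
  rcases hchord4 v (b v) (a (b v)) (a v) hvb h1 h3 hva.symm hne hne2 with h | h
  · exact h
  · have := a.map_adj_iff.mpr h
    rw [haa] at this
    exact this.symm
end

section
/- Assume G has the 4-cycle chord property and the 5-cycle chord property. If v is adjacent to a(b(v)), then v is adjacent to (a∘b)^2(v). -/
theorem stmt10 {V : Type*} (G : SimpleGraph V)
    (hchord4 : ∀ w1 w2 w3 w4 : V, G.Adj w1 w2 → G.Adj w2 w3 → G.Adj w3 w4 →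
      G.Adj w4 w1 → w1 ≠ w3 → w2 ≠ w4 → G.Adj w1 w3 ∨ G.Adj w2 w4)
    (hchord5 : ∀ w1 w2 w3 w4 w5 : V,
      ([w1, w2, w3, w4, w5] : List V).Pairwise (· ≠ ·) →
      G.Adj w1 w2 → G.Adj w2 w3 → G.Adj w3 w4 → G.Adj w4 w5 → G.Adj w5 w1 →
      G.Adj w1 w3 ∨ G.Adj w2 w4 ∨ G.Adj w3 w5 ∨ G.Adj w4 w1 ∨ G.Adj w5 w2)
    (a b : G ≃g G)
    (haa : ∀ z, a (a z) = z) (hbb : ∀ z, b (b z) = z)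
    (hab5 : ∀ z : V, a (b (a (b (a (b (a (b (a (b (z)))))))))) = z)
    (v : V) (hva : G.Adj v (a v)) (hvb : G.Adj v (b v))
    (hdist : ([v, a v, a (b v), a (b (a v)), a (b (a (b v))), a (b (a (b (a v)))), a (b (a (b (a (b v))))), a (b (a (b (a (b (a v)))))), a (b (a (b (a (b (a (b v))))))), a (b (a (b (a (b (a (b (a v))))))))] : List V).Pairwise (· ≠ ·))
    (hyp : G.Adj v (a (b v))) :
    G.Adj v (a (b (a (b v)))) := by
  have step : ∀ x y : V, G.Adj x y → G.Adj (a (b x)) (a (b y)) :=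
    fun x y h => a.map_rel_iff.mpr (b.map_rel_iff.mpr h)
  -- chords of the 5-cycle on even vertices
  have c24 := step _ _ hyp
  have c46 := step _ _ c24
  have c68 := step _ _ c46
  have c80 := step _ _ c68
  rw [hab5 v] at c80
  have hsub : ([v, a (b v), a (b (a (b v))), a (b (a (b (a (b v))))),
      a (b (a (b (a (b (a (b v)))))))] : List V).Sublist
      [v, a v, a (b v), a (b (a v)), a (b (a (b v))), a (b (a (b (a v)))),
       a (b (a (b (a (b v))))), a (b (a (b (a (b (a v)))))),
       a (b (a (b (a (b (a (b v))))))), a (b (a (b (a (b (a (b (a v))))))))] :=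
    .cons₂ _ (.cons _ (.cons₂ _ (.cons _ (.cons₂ _ (.cons _ (.cons₂ _ (.cons _
      (.cons₂ _ (.cons _ .slnil)))))))))
  have h5 := hchord5 v (a (b v)) (a (b (a (b v)))) (a (b (a (b (a (b v))))))
    (a (b (a (b (a (b (a (b v)))))))) (hdist.sublist hsub) hyp c24 c46 c68 c80
  rcases h5 with h | h | h | h | h
  · exact h
  · have h' := step _ _ (step _ _ (step _ _ (step _ _ h)))
    rwa [hab5 v] at h'
  · have h' := step _ _ (step _ _ (step _ _ h))
    rwa [hab5 v] at h'
  · have h' := step _ _ (step _ _ h)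
    rw [hab5 v] at h'
    exact h'
  · have h' := step _ _ h
    rw [hab5 v] at h'
    exact h'
end

section
/- Assume G has the 4-cycle chord property and the 5-cycle chord property. If v is adjacent to (a∘b)^2(v), then v is adjacent to (a∘b)^2(a(v)). -/
/-!
Write `r = a ∘ b`, so the vertices of the 10-cycle are `rᵏ v` and `rᵏ (a v)`; since `r⁵ = id`,
`b v = r⁴ (a v)` and `b r² = r² a`. The hypothesis `v ~ r² v`, the cycle edge `r² v ~ r² (a v)`,
its image `b v ~ r² (a v)` under `b`, and `b v ~ v` form a 4-cycle. Its diagonal `{r² v, b v}` is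
carried by `r³` onto the diagonal `{v, r² (a v)}`, so whichever chord the 4-cycle has,
`v ~ r² (a v)`.
-/

namespace Function.Involutive

variable {α : Type*} {a b : α → α}

theorem braid_of_pow_five (ha : Involutive a) (hb : Involutive b)
    (hab5 : ∀ z, a (b (a (b (a (b (a (b (a (b z))))))))) = z) (z : α) :
    b (a (b (a (b z)))) = a (b (a (b (a z)))) := by
  have h := congrArg (fun x => a (b (a (b (a x))))) (hab5 z)
  simpa only [ha _, hb _] using h

end Function.Involutive

namespace SimpleGraph

variable {V : Type*}

def FourCycleChordProperty (G : SimpleGraph V) : Prop :=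
  ∀ w1 w2 w3 w4 : V, G.Adj w1 w2 → G.Adj w2 w3 → G.Adj w3 w4 → G.Adj w4 w1 →
    w1 ≠ w3 → w2 ≠ w4 → G.Adj w1 w3 ∨ G.Adj w2 w4

theorem FourCycleChordProperty.adj_of_hom_map_diagonal {G : SimpleGraph V}
    (hG : G.FourCycleChordProperty) (φ : G →g G) {w1 w2 w3 w4 : V}
    (h12 : G.Adj w1 w2) (h23 : G.Adj w2 w3) (h34 : G.Adj w3 w4) (h41 : G.Adj w4 w1)
    (h13 : w1 ≠ w3) (h24 : w2 ≠ w4) (hφ2 : φ w2 = w1) (hφ4 : φ w4 = w3) :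
    G.Adj w1 w3 :=
  (hG w1 w2 w3 w4 h12 h23 h34 h41 h13 h24).elim id fun h => hφ2 ▸ hφ4 ▸ φ.map_adj h

end SimpleGraph

theorem stmt11_general {V : Type*} (G : SimpleGraph V)
    (hchord4 : ∀ w1 w2 w3 w4 : V, G.Adj w1 w2 → G.Adj w2 w3 → G.Adj w3 w4 →
      G.Adj w4 w1 → w1 ≠ w3 → w2 ≠ w4 → G.Adj w1 w3 ∨ G.Adj w2 w4)
    (a b : G ≃g G)
    (haa : ∀ z, a (a z) = z) (hbb : ∀ z, b (b z) = z)
    (hab5 : ∀ z : V, a (b (a (b (a (b (a (b (a (b (z)))))))))) = z)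
    (v : V) (hva : G.Adj v (a v)) (hvb : G.Adj v (b v))
    (hdist : ([v, a v, a (b v), a (b (a v)), a (b (a (b v))), a (b (a (b (a v)))), a (b (a (b (a (b v))))), a (b (a (b (a (b (a v)))))), a (b (a (b (a (b (a (b v))))))), a (b (a (b (a (b (a (b (a v))))))))] : List V).Pairwise (· ≠ ·))
    (hyp : G.Adj v (a (b (a (b v))))) :
    G.Adj v (a (b (a (b (a v))))) := by
  let r : G ≃g G := a.comp b
  have hne05 := List.pairwise_iff_getElem.mp hdist 0 5 (by simp) (by simp) (by norm_num)
  have hne49 := List.pairwise_iff_getElem.mp hdist 4 9 (by simp) (by simp) (by norm_num)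
  have hr4a : a (b (a (b (a (b (a (b (a v)))))))) = b v := by simpa only [hbb] using hab5 (b v)
  have e45 : G.Adj (a (b (a (b v)))) (a (b (a (b (a v))))) := (r.comp r).map_adj_iff.mpr hva
  have e59 : G.Adj (a (b (a (b (a v))))) (b v) := by
    rw [← Function.Involutive.braid_of_pow_five haa hbb hab5 v]
    exact (b.map_adj_iff.mpr hyp).symm
  have hG : G.FourCycleChordProperty := hchord4
  exact hG.adj_of_hom_map_diagonal (r.comp (r.comp r)).toHom hyp e45 e59 hvb.symm
    hne05 (hr4a ▸ hne49) (hab5 v) (congrArg (fun x => a (b (a (b (a x))))) (hbb v))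

theorem stmt11 {V : Type*} (G : SimpleGraph V)
    (hchord4 : ∀ w1 w2 w3 w4 : V, G.Adj w1 w2 → G.Adj w2 w3 → G.Adj w3 w4 →
      G.Adj w4 w1 → w1 ≠ w3 → w2 ≠ w4 → G.Adj w1 w3 ∨ G.Adj w2 w4)
    (hchord5 : ∀ w1 w2 w3 w4 w5 : V,
      ([w1, w2, w3, w4, w5] : List V).Pairwise (· ≠ ·) →
      G.Adj w1 w2 → G.Adj w2 w3 → G.Adj w3 w4 → G.Adj w4 w5 → G.Adj w5 w1 →
      G.Adj w1 w3 ∨ G.Adj w2 w4 ∨ G.Adj w3 w5 ∨ G.Adj w4 w1 ∨ G.Adj w5 w2)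
    (a b : G ≃g G)
    (haa : ∀ z, a (a z) = z) (hbb : ∀ z, b (b z) = z)
    (hab5 : ∀ z : V, a (b (a (b (a (b (a (b (a (b (z)))))))))) = z)
    (v : V) (hva : G.Adj v (a v)) (hvb : G.Adj v (b v))
    (hdist : ([v, a v, a (b v), a (b (a v)), a (b (a (b v))), a (b (a (b (a v)))), a (b (a (b (a (b v))))), a (b (a (b (a (b (a v)))))), a (b (a (b (a (b (a (b v))))))), a (b (a (b (a (b (a (b (a v))))))))] : List V).Pairwise (· ≠ ·))
    (hyp : G.Adj v (a (b (a (b v))))) :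
    G.Adj v (a (b (a (b (a v))))) :=
  stmt11_general G hchord4 a b haa hbb hab5 v hva hvb hdist hyp
end

section
/- Assume G has the 4-cycle chord property and the 5-cycle chord property. If v is adjacent to (a∘b)^2(a(v)), then v is adjacent to a(b(a(v))). -/
theorem stmt12 {V : Type*} (G : SimpleGraph V)
    (hchord4 : ∀ w1 w2 w3 w4 : V, G.Adj w1 w2 → G.Adj w2 w3 → G.Adj w3 w4 →
      G.Adj w4 w1 → w1 ≠ w3 → w2 ≠ w4 → G.Adj w1 w3 ∨ G.Adj w2 w4)
    (hchord5 : ∀ w1 w2 w3 w4 w5 : V,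
      ([w1, w2, w3, w4, w5] : List V).Pairwise (· ≠ ·) →
      G.Adj w1 w2 → G.Adj w2 w3 → G.Adj w3 w4 → G.Adj w4 w5 → G.Adj w5 w1 →
      G.Adj w1 w3 ∨ G.Adj w2 w4 ∨ G.Adj w3 w5 ∨ G.Adj w4 w1 ∨ G.Adj w5 w2)
    (a b : G ≃g G)
    (haa : ∀ z, a (a z) = z) (hbb : ∀ z, b (b z) = z)
    (hab5 : ∀ z : V, a (b (a (b (a (b (a (b (a (b (z)))))))))) = z)
    (v : V) (hva : G.Adj v (a v)) (hvb : G.Adj v (b v))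
    (hdist : ([v, a v, a (b v), a (b (a v)), a (b (a (b v))), a (b (a (b (a v)))), a (b (a (b (a (b v))))), a (b (a (b (a (b (a v)))))), a (b (a (b (a (b (a (b v))))))), a (b (a (b (a (b (a (b (a v))))))))] : List V).Pairwise (· ≠ ·))
    (hyp : G.Adj v (a (b (a (b (a v)))))) :
    G.Adj v (a (b (a v))) := by
  have hba5 : ∀ z : V, b (a (b (a (b (a (b (a (b (a z))))))))) = z := by
    intro z
    have h := congrArg a (hab5 (a z))
    simpa only [haa] using h
  have haA : ∀ x y : V, G.Adj x y → G.Adj (a x) (a y) := fun x y h => a.map_adj_iff.mpr h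
  have hbA : ∀ x y : V, G.Adj x y → G.Adj (b x) (b y) := fun x y h => b.map_adj_iff.mpr h
  have tr : ∀ {x y x' y' : V}, G.Adj x y → x = x' → y = y' → G.Adj x' y' := by
    rintro x y _ _ h rfl rfl; exact h
  have F9 : b (a (b (a (b (a (b (a (b (a (v)))))))))) = v := hba5 v
  have F0 : b v = a (b (a (b (a (b (a (b (a (v))))))))) := by have h := congrArg b F9; rw [hbb] at h; exact h.symm
  have F8 : b (a (b (a (b (a (b (a (b (v))))))))) = a (v) := a.injective (by rw [haa]; exact hab5 v)
  have F1 : b (a (v)) = a (b (a (b (a (b (a (b (v)))))))) := by have h := congrArg b F8; rw [hbb] at h; exact h.symm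
  have F7 : b (a (b (a (b (a (b (a (v)))))))) = a (b (v)) := a.injective (by rw [haa]; exact F0.symm)
  have F2 : b (a (b (v))) = a (b (a (b (a (b (a (v))))))) := by have h := congrArg b F7; rw [hbb] at h; exact h.symm
  have F6 : b (a (b (a (b (a (b (v))))))) = a (b (a (v))) := a.injective (by rw [haa]; exact F1.symm)
  have F3 : b (a (b (a (v)))) = a (b (a (b (a (b (v)))))) := by have h := congrArg b F6; rw [hbb] at h; exact h.symm
  have F5 : b (a (b (a (b (a (v)))))) = a (b (a (b (v)))) := a.injective (by rw [haa]; exact F2.symm)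
  have F4 : b (a (b (a (b (v))))) = a (b (a (b (a (v))))) := by have h := congrArg b F5; rw [hbb] at h; exact h.symm
  have G1 : a (a (v)) = v := haa v
  have G2 : a (a (b (v))) = a (b (a (b (a (b (a (b (a (v))))))))) := by rw [haa, F0]
  have G3 : a (a (b (a (v)))) = a (b (a (b (a (b (a (b (v)))))))) := by rw [haa, F1]
  have G4 : a (a (b (a (b (v))))) = a (b (a (b (a (b (a (v))))))) := by rw [haa, F2]
  have G5 : a (a (b (a (b (a (v)))))) = a (b (a (b (a (b (v)))))) := by rw [haa, F3]
  have G6 : a (a (b (a (b (a (b (v))))))) = a (b (a (b (a (v))))) := by rw [haa, F4]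
  have G7 : a (a (b (a (b (a (b (a (v)))))))) = a (b (a (b (v)))) := by rw [haa, F5]
  have G8 : a (a (b (a (b (a (b (a (b (v))))))))) = a (b (a (v))) := by rw [haa, F6]
  have G9 : a (a (b (a (b (a (b (a (b (a (v)))))))))) = a (b (v)) := by rw [haa, F7]
  simp only [List.pairwise_cons, List.mem_cons, List.not_mem_nil, or_false] at hdist
  obtain ⟨d0, d1, d2, d3, d4, d5, d6, d7, d8, -⟩ := hdist
  have n01 : (v : V) ≠ a (v) := d0 (a (v)) (by simp)
  have n02 : (v : V) ≠ a (b (v)) := d0 (a (b (v))) (by simp)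
  have n03 : (v : V) ≠ a (b (a (v))) := d0 (a (b (a (v)))) (by simp)
  have n04 : (v : V) ≠ a (b (a (b (v)))) := d0 (a (b (a (b (v))))) (by simp)
  have n06 : (v : V) ≠ a (b (a (b (a (b (v)))))) := d0 (a (b (a (b (a (b (v))))))) (by simp)
  have n12 : (a (v) : V) ≠ a (b (v)) := d1 (a (b (v))) (by simp)
  have n13 : (a (v) : V) ≠ a (b (a (v))) := d1 (a (b (a (v)))) (by simp)
  have n14 : (a (v) : V) ≠ a (b (a (b (v)))) := d1 (a (b (a (b (v))))) (by simp)
  have n15 : (a (v) : V) ≠ a (b (a (b (a (v))))) := d1 (a (b (a (b (a (v)))))) (by simp)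
  have n23 : (a (b (v)) : V) ≠ a (b (a (v))) := d2 (a (b (a (v)))) (by simp)
  have n24 : (a (b (v)) : V) ≠ a (b (a (b (v)))) := d2 (a (b (a (b (v))))) (by simp)
  have n29 : (a (b (v)) : V) ≠ a (b (a (b (a (b (a (b (a (v))))))))) := d2 (a (b (a (b (a (b (a (b (a (v)))))))))) (by simp)
  have n34 : (a (b (a (v))) : V) ≠ a (b (a (b (v)))) := d3 (a (b (a (b (v))))) (by simp)
  have n47 : (a (b (a (b (v)))) : V) ≠ a (b (a (b (a (b (a (v))))))) := d4 (a (b (a (b (a (b (a (v)))))))) (by simp)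
  have hp5 : ([v, a (v), a (b (v)), a (b (a (v))), a (b (a (b (v))))] : List V).Pairwise (· ≠ ·) := by
    refine List.Pairwise.cons ?_ (List.Pairwise.cons ?_ (List.Pairwise.cons ?_ (List.Pairwise.cons ?_ (List.pairwise_singleton _ _))))
    · rintro x hx; simp only [List.mem_cons, List.not_mem_nil, or_false] at hx
      rcases hx with rfl|rfl|rfl|rfl; exacts [n01, n02, n03, n04]
    · rintro x hx; simp only [List.mem_cons, List.not_mem_nil, or_false] at hx
      rcases hx with rfl|rfl|rfl; exacts [n12, n13, n14]
    · rintro x hx; simp only [List.mem_cons, List.not_mem_nil, or_false] at hx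
      rcases hx with rfl|rfl; exacts [n23, n24]
    · rintro x hx; simp only [List.mem_cons, List.not_mem_nil, or_false] at hx
      rcases hx with rfl; exact n34
  have h09 : G.Adj v (a (b (a (b (a (b (a (b (a (v)))))))))) := tr hvb rfl F0
  have h98 : G.Adj (a (b (a (b (a (b (a (b (a (v)))))))))) (a (b (a (b (a (b (a (b (v))))))))) := tr (hbA _ _ hva) F0 F1
  have h12 : G.Adj (a (v)) (a (b (v))) := tr (haA _ _ h09) rfl G9
  have h23 : G.Adj (a (b (v))) (a (b (a (v)))) := tr (haA _ _ h98) G9 G8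
  have h87 : G.Adj (a (b (a (b (a (b (a (b (v))))))))) (a (b (a (b (a (b (a (v)))))))) := tr (hbA _ _ h12) F1 F2
  have h34 : G.Adj (a (b (a (v)))) (a (b (a (b (v))))) := tr (haA _ _ h87) G8 G7
  have h65 : G.Adj (a (b (a (b (a (b (v))))))) (a (b (a (b (a (v)))))) := tr (hbA _ _ h34) F3 F4
  have h16 : G.Adj (a (v)) (a (b (a (b (a (b (v))))))) := tr (haA _ _ hyp) rfl G5
  have h06 : G.Adj v (a (b (a (b (a (b (v))))))) := by
    rcases hchord4 v (a (b (a (b (a (v)))))) (a (b (a (b (a (b (v))))))) (a (v)) hyp h65.symm h16.symm hva.symm n06 n15.symm with h | h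
    · exact h
    · exact (tr (haA _ _ h) G5 G1).symm
  have h04 : G.Adj v (a (b (a (b (v))))) := by
    have h := tr (hbA _ _ h06) F0 F6
    have h := tr (haA _ _ h) G9 G3
    have h := tr (hbA _ _ h) F2 F8
    exact (tr (haA _ _ h) G7 G1).symm
  have h39 : G.Adj (a (b (a (v)))) (a (b (a (b (a (b (a (b (a (v)))))))))) := by
    have h := tr (haA _ _ h04) rfl G4
    have h := tr (hbA _ _ h) F1 F7
    exact tr (haA _ _ h) G8 G2
  have h37 : G.Adj (a (b (a (v)))) (a (b (a (b (a (b (a (v)))))))) := by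
    have h := tr (hbA _ _ h04) F0 F4
    have h := tr (haA _ _ h) G9 G5
    exact (tr (hbA _ _ h) F2 F6).symm
  have key : G.Adj (a (b (a (b (a (b (a (v)))))))) v → G.Adj v (a (b (a (v)))) := by
    intro h70
    rcases hchord4 v (a (b (a (b (v))))) (a (b (a (v)))) (a (b (a (b (a (b (a (v)))))))) h04 h34.symm h37 h70 n03 n47 with h | h
    · exact h
    · have h := tr (hbA _ _ h) F4 F7
      have h := tr (haA _ _ h) G5 G2
      exact (tr (hbA _ _ h) F6 F9).symm
  have hc1 : G.Adj v (a (b (v))) → G.Adj v (a (b (a (v)))) := by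
    intro h02
    rcases hchord4 v (a (b (v))) (a (b (a (v)))) (a (b (a (b (a (b (a (b (a (v)))))))))) h02 h23 h39 h09.symm n03 n29 with h | h
    · exact h
    · have h := tr (haA _ _ h) G2 G9
      exact key (tr (hbA _ _ h) F9 F2).symm
  rcases hchord5 v (a (v)) (a (b (v))) (a (b (a (v)))) (a (b (a (b (v))))) hp5 hva h12 h23 h34 h04.symm with h | h | h | h | h
  · exact hc1 h
  · have h := tr (haA _ _ h) G1 G3
    have h := tr (hbA _ _ h) F0 F8
    exact hc1 (tr (haA _ _ h) G9 G1).symm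
  · have h := tr (haA _ _ h) G2 G4
    exact hc1 (tr (hbA _ _ h) F9 F7)
  · exact h.symm
  · exact key (tr (haA _ _ h) G4 G1)
end

section
/- Assume G has the 4-cycle chord property and the 5-cycle chord property. If v is adjacent to (a∘b)^2(a(v)), then v is adjacent to b(a(b(v))). -/
theorem stmt13 {V : Type*} (G : SimpleGraph V)
    (hchord4 : ∀ w1 w2 w3 w4 : V, G.Adj w1 w2 → G.Adj w2 w3 → G.Adj w3 w4 →
      G.Adj w4 w1 → w1 ≠ w3 → w2 ≠ w4 → G.Adj w1 w3 ∨ G.Adj w2 w4)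
    (hchord5 : ∀ w1 w2 w3 w4 w5 : V,
      ([w1, w2, w3, w4, w5] : List V).Pairwise (· ≠ ·) →
      G.Adj w1 w2 → G.Adj w2 w3 → G.Adj w3 w4 → G.Adj w4 w5 → G.Adj w5 w1 →
      G.Adj w1 w3 ∨ G.Adj w2 w4 ∨ G.Adj w3 w5 ∨ G.Adj w4 w1 ∨ G.Adj w5 w2)
    (a b : G ≃g G)
    (haa : ∀ z, a (a z) = z) (hbb : ∀ z, b (b z) = z)
    (hab5 : ∀ z : V, a (b (a (b (a (b (a (b (a (b (z)))))))))) = z)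
    (v : V) (hva : G.Adj v (a v)) (hvb : G.Adj v (b v))
    (hdist : ([v, a v, a (b v), a (b (a v)), a (b (a (b v))), a (b (a (b (a v)))), a (b (a (b (a (b v))))), a (b (a (b (a (b (a v)))))), a (b (a (b (a (b (a (b v))))))), a (b (a (b (a (b (a (b (a v))))))))] : List V).Pairwise (· ≠ ·))
    (hyp : G.Adj v (a (b (a (b (a v)))))) :
    G.Adj v (b (a (b v))) := by
  have hA : ∀ {u w : V}, G.Adj u w → G.Adj (a u) (a w) := fun h => a.map_adj_iff.mpr h
  have hB : ∀ {u w : V}, G.Adj u w → G.Adj (b u) (b w) := fun h => b.map_adj_iff.mpr h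
  have hT : ∀ {u w : V}, G.Adj u w → G.Adj (a (b u)) (a (b w)) := fun h => hA (hB h)
  simp only [List.pairwise_cons, List.mem_cons, List.not_mem_nil, List.mem_singleton, or_false, forall_eq_or_imp, forall_eq] at hdist
  obtain ⟨⟨n01, n02, n03, n04, n05, n06, n07, n08, n09⟩, ⟨n12, n13, n14, n15, n16, n17, n18, n19⟩, ⟨n23, n24, n25, n26, n27, n28, n29⟩, ⟨n34, n35, n36, n37, n38, n39⟩, ⟨n45, n46, n47, n48, n49⟩, ⟨n56, n57, n58, n59⟩, ⟨n67, n68, n69⟩, ⟨n78, n79⟩, n89⟩ := hdist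
  have g8 : a (b (a (b (a (b (a (b (a (b (v)))))))))) = v := hab5 v
  have g9 : a (b (a (b (a (b (a (b (a (b (a (v))))))))))) = a v := hab5 (a v)
  have e9 : b (a (b (a (b (a (b (a (b (a (v)))))))))) = v := by have h := congrArg a g9; rwa [haa, haa] at h
  have e9' : (a (b (a (b (a (b (a (b (a (v)))))))))) = b v := by have h := congrArg b e9; rwa [hbb] at h
  have e7 : b (a (b (a (b (a (b (a (v)))))))) = a (b (v)) := by have h := congrArg a e9'; rwa [haa] at h
  have e7' : (a (b (a (b (a (b (a (v)))))))) = b (a (b (v))) := by have h := congrArg b e7; rwa [hbb] at h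
  have e5 : b (a (b (a (b (a (v)))))) = a (b (a (b (v)))) := by have h := congrArg a e7'; rwa [haa] at h
  have e5' : (a (b (a (b (a (v)))))) = b (a (b (a (b (v))))) := by have h := congrArg b e5; rwa [hbb] at h
  have e3 : b (a (b (a (v)))) = a (b (a (b (a (b (v)))))) := by have h := congrArg a e5'; rwa [haa] at h
  have e3' : (a (b (a (v)))) = b (a (b (a (b (a (b (v))))))) := by have h := congrArg b e3; rwa [hbb] at h
  have e1 : b (a v) = a (b (a (b (a (b (a (b (v)))))))) := by have h := congrArg a e3'; rwa [haa] at h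
  have e0 : b v = a (b (a (b (a (b (a (b (a (v))))))))) := e9'.symm
  have e2 : b (a (b (v))) = a (b (a (b (a (b (a (v))))))) := e7'.symm
  have e4 : b (a (b (a (b (v))))) = a (b (a (b (a (v))))) := e5'.symm
  have e6 : b (a (b (a (b (a (b (v))))))) = a (b (a (v))) := e3'.symm
  have fa1 : a (a v) = v := haa v
  have fa2 : a (a (b (v))) = a (b (a (b (a (b (a (b (a (v))))))))) := (haa (b v)).trans e0
  have fa3 : a (a (b (a (v)))) = a (b (a (b (a (b (a (b (v)))))))) := (haa (b (a v))).trans e1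
  have fa4 : a (a (b (a (b (v))))) = a (b (a (b (a (b (a (v))))))) := (haa (b (a (b (v))))).trans e2
  have fa5 : a (a (b (a (b (a (v)))))) = a (b (a (b (a (b (v)))))) := (haa (b (a (b (a (v)))))).trans e3
  have fa6 : a (a (b (a (b (a (b (v))))))) = a (b (a (b (a (v))))) := (haa (b (a (b (a (b (v))))))).trans e4
  have c1 : G.Adj (a v) (a (b (v))) := hA hvb
  have c2 := hT hva
  have c3 := hT c1
  have c4 := hT c2
  have c5 := hT c3
  have c6 := hT c4
  have d2 := hT hyp
  have d4 := hT d2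
  have d6 : G.Adj (a (b (a (b (a (b (v))))))) (a v) := by have h := hT d4; rwa [g9] at h
  have h06 : G.Adj v (a (b (a (b (a (b (v))))))) := by
    rcases hchord4 v (a v) (a (b (a (b (a (b (v))))))) (a (b (a (b (a (v)))))) hva d6.symm c5.symm hyp.symm n06 n15 with h | h
    · exact h
    · have h2 := hA h
      rwa [fa1, fa5] at h2
  have h28 := hT h06
  have h40 : G.Adj (a (b (a (b (v))))) v := by have h := hT h28; rwa [g8] at h
  have h37 : G.Adj (a (b (a (v)))) (a (b (a (b (a (b (a (v)))))))) := by
    have h := hA h06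
    rw [fa6] at h
    exact hT h
  have hCA : G.Adj v (a (b (a (v)))) → G.Adj v (a (b (a (b (a (b (a (v)))))))) := by
    intro h03
    rcases hchord4 v (a (b (a (v)))) (a (b (a (b (a (b (a (v)))))))) (a (b (a (b (a (b (v))))))) h03 h37 c6.symm h06.symm n07 n36 with h | h
    · exact h
    · have h2 := hA h
      rw [fa3, fa6] at h2
      have h3 := hT h2
      rwa [g8] at h3
  have hBB : G.Adj v (a (b (v))) → G.Adj v (a (b (a (b (a (b (a (v)))))))) := by
    intro h02
    have h1 := hA h02
    rw [fa2] at h1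
    have h2 := hT h1
    rw [g9] at h2
    have h4 := hT (hT h2)
    rcases hchord4 v (a (b (v))) (a (b (a (b (a (b (a (v)))))))) (a (b (a (b (a (v)))))) h02 d2 h4 hyp.symm n07 n25 with h | h
    · exact h
    · have h5 := hA h
      rw [fa2, fa5] at h5
      have h6 := hB h5
      rw [e9, e6] at h6
      exact hCA h6
  have hp5 : ([v, a v, a (b (v)), a (b (a (v))), a (b (a (b (v))))] : List V).Pairwise (· ≠ ·) := by
    simp only [List.pairwise_cons, List.mem_cons, List.not_mem_nil, List.mem_singleton, or_false, forall_eq_or_imp, forall_eq, List.Pairwise.nil, and_true]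
    exact ⟨⟨n01, n02, n03, n04⟩, ⟨n12, n13, n14⟩, ⟨n23, n24⟩, n34, fun _ h => h.elim⟩
  have h07 : G.Adj v (a (b (a (b (a (b (a (v)))))))) := by
    rcases hchord5 v (a v) (a (b (v))) (a (b (a (v)))) (a (b (a (b (v))))) hp5 hva c1 c2 c3 h40 with h|h|h|h|h
    · exact hBB h
    · have h2 := hA h
      rw [fa1, fa3] at h2
      have h3 := hT h2
      rw [g8] at h3
      exact hBB h3.symm
    · have h2 := hA h
      rw [fa2, fa4] at h2
      have h3 := hB h2
      rw [e9, e7] at h3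
      exact hBB h3
    · exact hCA h.symm
    · have h2 := hA h
      rw [fa4, fa1] at h2
      exact h2.symm
  rwa [e7'] at h07
end

section
/- Assume G has the 4-cycle chord property and the 5-cycle chord property, the 10-cycle O is chordless, and w is a vertex of G whose images under the ten elements of the dihedral group generated by s and t are pairwise distinct. If w is adjacent to 5 consecutive vertices of O, then there exists a vertex of G adjacent to 6 consecutive vertices of O. -/
/-! The rotation `r = s * t` moves `O` two steps forward, so the copies `rʲ w`, `j < 5`, are
adjacent to the arcs of five vertices starting at `i + 2j`. Two copies coincide only if one vertex
sees two different 5-arcs, and then it sees 6 consecutive vertices. Consecutive copies share the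
non-adjacent neighbours `o (i + 2j + 2)`, `o (i + 2j + 4)`, so by the 4-cycle property they are
adjacent and the copies form a 5-cycle. A chord of it gives adjacent `x`, `y` seeing the arcs
`k, …, k + 4` and `k + 4, …, k + 8`, and the chords of the 5-cycle `x y o(k+8) o(k+9) o(k)`,
refined by the 4-cycle property, force `x` or `y` to be adjacent to `o (k + 9)`. -/

open Fin.NatCast

section

variable {V : Type*} {G : SimpleGraph V}

def FourCycleChordProperty (G : SimpleGraph V) : Prop :=
  ∀ w1 w2 w3 w4 : V, G.Adj w1 w2 → G.Adj w2 w3 → G.Adj w3 w4 →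
    G.Adj w4 w1 → w1 ≠ w3 → w2 ≠ w4 → G.Adj w1 w3 ∨ G.Adj w2 w4

def FiveCycleChordProperty (G : SimpleGraph V) : Prop :=
  ∀ w1 w2 w3 w4 w5 : V, ([w1, w2, w3, w4, w5] : List V).Pairwise (· ≠ ·) →
    G.Adj w1 w2 → G.Adj w2 w3 → G.Adj w3 w4 → G.Adj w4 w5 → G.Adj w5 w1 →
    G.Adj w1 w3 ∨ G.Adj w2 w4 ∨ G.Adj w3 w5 ∨ G.Adj w4 w1 ∨ G.Adj w5 w2

structure IsChordlessTenCycle (G : SimpleGraph V) (o : Fin 10 → V) : Prop where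
  adj_succ : ∀ k, G.Adj (o k) (o (k + 1))
  not_adj : ∀ i j : Fin 10, i ≠ j → j ≠ i + 1 → i ≠ j + 1 → ¬ G.Adj (o i) (o j)

def AdjArc (G : SimpleGraph V) {n : ℕ} [NeZero n] (o : Fin n → V) (x : V) (k : Fin n)
    (len : ℕ) : Prop :=
  ∀ m : ℕ, m < len → G.Adj x (o (k + (m : Fin n)))

namespace AdjArc

variable {n : ℕ} [NeZero n] {o : Fin n → V} {x : V} {k : Fin n} {len : ℕ}

theorem adj (h : AdjArc G o x k len) {m : ℕ} (hm : m < len) {j : Fin n} (hj : k + m = j) :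
    G.Adj x (o j) :=
  hj ▸ h m hm

theorem mono (h : AdjArc G o x k len) {len' : ℕ} (hle : len' ≤ len) : AdjArc G o x k len' :=
  fun m hm => h m (hm.trans_le hle)

theorem append {d len' : ℕ} (h : AdjArc G o x k len) (h' : AdjArc G o x (k + d) len')
    (hd : d ≤ len) : AdjArc G o x k (d + len') := by
  intro m hm
  rcases lt_or_ge m d with hmd | hdm
  · exact h m (hmd.trans_le hd)
  · obtain ⟨j, rfl⟩ := Nat.exists_eq_add_of_le hdm
    simpa only [Nat.cast_add, add_assoc] using h' j (by omega)

theorem single (h : G.Adj x (o k)) : AdjArc G o x k 1 := by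
  intro m hm
  obtain rfl : m = 0 := by omega
  simpa using h

theorem map (r : G ≃g G) {d : Fin n} (hr : ∀ k, r (o k) = o (k + d)) (h : AdjArc G o x k len) :
    AdjArc G o (r x) (k + d) len := by
  intro m hm
  simpa only [hr, add_right_comm k d] using r.map_adj_iff.mpr (h m hm)

end AdjArc

section Rotation

variable {n : ℕ} [NeZero n] (r : G ≃g G) {o : Fin n → V} {d : Fin n}

theorem apply_pow_eq_add_nsmul (hr : ∀ k, r (o k) = o (k + d)) (j : ℕ) (k : Fin n) :
    (r ^ j) (o k) = o (k + j • d) := by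
  induction j generalizing k with
  | zero => simp
  | succ j ih => rw [pow_succ, RelIso.mul_apply, hr, ih, succ_nsmul', add_assoc]

theorem AdjArc.map_pow (hr : ∀ k, r (o k) = o (k + d)) {x : V} {k : Fin n} {len : ℕ}
    (h : AdjArc G o x k len) (j : ℕ) : AdjArc G o ((r ^ j) x) (k + j • d) len :=
  h.map (r ^ j) (apply_pow_eq_add_nsmul r hr j)

end Rotation

namespace AdjArc

variable {o : Fin 10 → V} {x : V}

theorem six_of_five_of_sub_le {k k' : Fin 10} (h : AdjArc G o x k 5) (h' : AdjArc G o x k' 5)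
    (hne : k ≠ k') (hle : (k' - k).val ≤ 5) : AdjArc G o x k 6 := by
  have hk' : k + ((k' - k).val : Fin 10) = k' := by
    rw [Fin.cast_val_eq_self, add_sub_cancel]
  have hpos : (k' - k).val ≠ 0 := by
    rw [Fin.val_ne_zero_iff, sub_ne_zero]
    exact hne.symm
  exact (h.append (hk' ▸ h') hle).mono (by omega)

theorem exists_six_of_five_of_ne {k k' : Fin 10} (h : AdjArc G o x k 5)
    (h' : AdjArc G o x k' 5) (hne : k ≠ k') : ∃ j, AdjArc G o x j 6 := by
  have key : ∀ a b : Fin 10, (b - a).val ≤ 5 ∨ (a - b).val ≤ 5 := by decide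
  rcases key k k' with hle | hle
  · exact ⟨k, h.six_of_five_of_sub_le h' hne hle⟩
  · exact ⟨k', h'.six_of_five_of_sub_le h hne.symm hle⟩

end AdjArc

theorem isChordlessTenCycle_of_rotation {o : Fin 10 → V} (r : G ≃g G)
    (hr : ∀ k, r (o k) = o (k + 2)) (h₀ : G.Adj (o 0) (o 1)) (h₁ : G.Adj (o 1) (o 2))
    (hchordless : ∀ i j : Fin 10, i ≠ j → j ≠ i + 1 → i ≠ j + 1 →
      ¬ G.Adj (o i) (o j)) :
    IsChordlessTenCycle G o := by
  refine ⟨fun k => ?_, hchordless⟩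
  have key : ∀ k : Fin 10, ∃ j : Fin 5, (0 + (j : ℕ) • 2 = k ∧ 1 + (j : ℕ) • 2 = k + 1) ∨
      (1 + (j : ℕ) • 2 = k ∧ 2 + (j : ℕ) • 2 = k + 1) := by decide
  obtain ⟨j, ⟨hk, hk'⟩ | ⟨hk, hk'⟩⟩ := key k
  · simpa only [apply_pow_eq_add_nsmul r hr, hk, hk'] using
      (r ^ (j : ℕ)).map_adj_iff.mpr h₀
  · simpa only [apply_pow_eq_add_nsmul r hr, hk, hk'] using
      (r ^ (j : ℕ)).map_adj_iff.mpr h₁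

namespace IsChordlessTenCycle

variable {o : Fin 10 → V} (hO : IsChordlessTenCycle G o)
include hO

theorem eq_add_one_or_of_adj {i j : Fin 10} (h : G.Adj (o i) (o j)) :
    j = i + 1 ∨ i = j + 1 := by
  by_contra! hne
  exact hO.not_adj i j (fun hij => G.irrefl (hij ▸ h)) hne.1 hne.2 h

theorem injective : Function.Injective o := by
  intro a b hab
  have h₁ := hO.eq_add_one_or_of_adj (hab ▸ hO.adj_succ a)
  have h₂ := hO.eq_add_one_or_of_adj (hab.symm ▸ hO.adj_succ b)
  have key : ∀ a b : Fin 10, (a + 1 = b + 1 ∨ b = a + 1 + 1) →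
      (b + 1 = a + 1 ∨ a = b + 1 + 1) → a = b := by decide
  exact key a b h₁ h₂

theorem ne_of_adjArc_three {x : V} {k : Fin 10} (hx : AdjArc G o x k 3) (j : Fin 10) :
    o j ≠ x := by
  rintro rfl
  have h₀ := hO.eq_add_one_or_of_adj (hx.adj (m := 0) (j := k) (by norm_num) (add_zero k))
  have h₁ := hO.eq_add_one_or_of_adj (hx.adj (m := 1) (j := k + 1) (by norm_num) rfl)
  have h₂ := hO.eq_add_one_or_of_adj (hx.adj (m := 2) (j := k + 2) (by norm_num) rfl)
  have key : ∀ j k : Fin 10, (k = j + 1 ∨ j = k + 1) → (k + 1 = j + 1 ∨ j = k + 1 + 1) →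
      (k + 2 = j + 1 ∨ j = k + 2 + 1) → False := by decide
  exact key j k h₀ h₁ h₂

theorem ne_add (k : Fin 10) {c c' : Fin 10} (h : c ≠ c') : o (k + c) ≠ o (k + c') :=
  hO.injective.ne (by simpa using h)

theorem adj_add (k : Fin 10) {c c' : Fin 10} (h : c' = c + 1) :
    G.Adj (o (k + c)) (o (k + c')) := by
  simpa only [h, add_assoc] using hO.adj_succ (k + c)

theorem not_adj_add (k : Fin 10) {c c' : Fin 10} (h : c ≠ c' ∧ c' ≠ c + 1 ∧ c ≠ c' + 1) :
    ¬ G.Adj (o (k + c)) (o (k + c')) := by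
  obtain ⟨h₀, h₁, h₂⟩ := h
  refine hO.not_adj _ _ ?_ ?_ ?_
  · simpa using h₀
  · rw [add_assoc]; simpa using h₁
  · rw [add_assoc]; simpa using h₂

theorem adj_of_adj_of_adj_add_two (h4 : FourCycleChordProperty G) {x y : V} {j : Fin 10}
    (hxy : x ≠ y) (hx : G.Adj x (o j)) (hx' : G.Adj x (o (j + 2))) (hy : G.Adj y (o j))
    (hy' : G.Adj y (o (j + 2))) : G.Adj x y := by
  refine (h4 x (o j) y (o (j + 2)) hx hy.symm hy' hx'.symm hxy ?_).resolve_right ?_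
  · simpa using hO.ne_add j (c := 0) (c' := 2) (by decide)
  · simpa using hO.not_adj_add j (c := 0) (c' := 2) (by decide)

theorem exists_adjArc_six_of_adj (h4 : FourCycleChordProperty G)
    (h5 : FiveCycleChordProperty G) {x y : V} {k : Fin 10} (hx : AdjArc G o x k 5)
    (hy : AdjArc G o y (k + 4) 5) (hxy : G.Adj x y) : ∃ u j, AdjArc G o u j 6 := by
  have hx0 : G.Adj x (o (k + 0)) := hx.adj (m := 0) (by norm_num) rfl
  have hy8 : G.Adj y (o (k + 8)) := hy.adj (m := 4) (by norm_num) (by simp [add_assoc])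
  have e89 : G.Adj (o (k + 8)) (o (k + 9)) := hO.adj_add k (by decide)
  have e90 : G.Adj (o (k + 9)) (o (k + 0)) := hO.adj_add k (by decide)
  have hx9 (h : G.Adj x (o (k + 9))) : ∃ u j, AdjArc G o u j 6 :=
    ⟨x, k + 9, (AdjArc.single h).append (by simpa [add_assoc] using hx) le_rfl⟩
  have hy9 (h : G.Adj y (o (k + 9))) : ∃ u j, AdjArc G o u j 6 :=
    ⟨y, k + 4, hy.append (d := 5) (AdjArc.single (by simpa [add_assoc] using h)) le_rfl⟩
  have hxO := hO.ne_of_adjArc_three (hx.mono (by norm_num))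
  have hyO := hO.ne_of_adjArc_three (hy.mono (by norm_num))
  have pw : [x, y, o (k + 8), o (k + 9), o (k + 0)].Pairwise (· ≠ ·) := by
    have := hO.ne_add k (c := 8) (c' := 9) (by decide)
    have := hO.ne_add k (c := 8) (c' := 0) (by decide)
    have := hO.ne_add k (c := 9) (c' := 0) (by decide)
    simp only [List.pairwise_cons, List.mem_cons, List.not_mem_nil, List.Pairwise.nil,
      forall_eq_or_imp, ne_eq, hxy.ne, fun j => (hxO j).symm, fun j => (hyO j).symm]
    tauto
  have n80 := hO.not_adj_add k (c := 8) (c' := 0) (by decide)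
  rcases h5 x y _ _ _ pw hxy hy8 e89 e90 hx0.symm with h | h | h | h | h
  · refine (h4 x _ _ _ h e89 e90 hx0.symm (hxO _).symm (hO.ne_add k (by decide))).elim hx9 ?_
    exact fun h' => absurd h' n80
  · exact hy9 h
  · exact absurd h n80
  · exact hx9 h.symm
  · refine (h4 y _ _ _ h.symm e90.symm e89.symm hy8.symm (hyO _).symm
      (hO.ne_add k (by decide))).elim hy9 ?_
    exact fun h' => absurd h'.symm n80

theorem exists_adjArc_six (h4 : FourCycleChordProperty G) (h5 : FiveCycleChordProperty G)
    (r : G ≃g G) (hr : ∀ k, r (o k) = o (k + 2)) (hr5 : r ^ 5 = 1) {x : V} {k : Fin 10}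
    (hx : AdjArc G o x k 5) : ∃ u j, AdjArc G o u j 6 := by
  by_contra! hnone
  set c : ℕ → V := fun j => (r ^ j) x with hc
  have harc (j : ℕ) : AdjArc G o (c j) (k + j • 2) 5 := hx.map_pow r hr j
  have hperiod (j : ℕ) : c (j + 5) = c j := by
    simp only [hc, pow_add, hr5, mul_one]
  have hinj : Function.Injective fun a : Fin 5 => c a := by
    intro a b (hab : c a = c b)
    by_contra hne
    have key : ∀ a b : Fin 5, a ≠ b → (a : ℕ) • (2 : Fin 10) ≠ (b : ℕ) • 2 := by decide
    obtain ⟨j, hj⟩ := AdjArc.exists_six_of_five_of_ne (harc a) (hab ▸ harc b)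
      (fun h => key a b hne (add_left_cancel h))
    exact hnone _ _ hj
  have hadj (j : ℕ) (hne : c j ≠ c (j + 1)) : G.Adj (c j) (c (j + 1)) := by
    have hx := harc j
    have hy := harc (j + 1)
    rw [succ_nsmul, ← add_assoc] at hy
    generalize k + j • 2 = p at hx hy
    refine hO.adj_of_adj_of_adj_add_two h4 hne
      (hx.adj (m := 2) (j := p + 2) (by norm_num) rfl)
      (hx.adj (m := 4) (j := p + 2 + 2) (by norm_num) (by rw [add_assoc]; rfl))
      (hy.adj (m := 0) (j := p + 2) (by norm_num) (add_zero _))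
      (hy.adj (m := 2) (j := p + 2 + 2) (by norm_num) rfl)
  have hchord (j : ℕ) (h : G.Adj (c j) (c (j + 2))) : False := by
    have hs : k + (j + 2) • 2 = k + j • 2 + 4 := by rw [add_nsmul, add_assoc]; rfl
    obtain ⟨u, i, hu⟩ := hO.exists_adjArc_six_of_adj h4 h5 (harc j) (hs ▸ harc (j + 2)) h
    exact hnone u i hu
  have hc5 : c 5 = c 0 := hperiod 0
  have e40 : G.Adj (c 4) (c 0) := by
    rw [← hc5]
    exact hadj 4 (hc5 ▸ hinj.ne (a₁ := 4) (a₂ := 0) (by decide))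
  rcases h5 (c 0) (c 1) (c 2) (c 3) (c 4) (List.nodup_ofFn.mpr hinj)
      (hadj 0 (hinj.ne (a₁ := 0) (a₂ := 1) (by decide)))
      (hadj 1 (hinj.ne (a₁ := 1) (a₂ := 2) (by decide)))
      (hadj 2 (hinj.ne (a₁ := 2) (a₂ := 3) (by decide)))
      (hadj 3 (hinj.ne (a₁ := 3) (a₂ := 4) (by decide))) e40 with h | h | h | h | h
  · exact hchord 0 h
  · exact hchord 1 h
  · exact hchord 2 h
  · exact hchord 3 (hperiod 0 ▸ h)
  · exact hchord 4 (hperiod 1 ▸ h)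

end IsChordlessTenCycle

end

theorem stmt14_general {V : Type*} (G : SimpleGraph V)
    (hchord4 : ∀ w1 w2 w3 w4 : V, G.Adj w1 w2 → G.Adj w2 w3 → G.Adj w3 w4 →
      G.Adj w4 w1 → w1 ≠ w3 → w2 ≠ w4 → G.Adj w1 w3 ∨ G.Adj w2 w4)
    (hchord5 : ∀ w1 w2 w3 w4 w5 : V,
      ([w1, w2, w3, w4, w5] : List V).Pairwise (· ≠ ·) →
      G.Adj w1 w2 → G.Adj w2 w3 → G.Adj w3 w4 → G.Adj w4 w5 → G.Adj w5 w1 →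
      G.Adj w1 w3 ∨ G.Adj w2 w4 ∨ G.Adj w3 w5 ∨ G.Adj w4 w1 ∨ G.Adj w5 w2)
    (s t : G ≃g G)
    (hst5 : ∀ z : V, s (t (s (t (s (t (s (t (s (t (z)))))))))) = z)
    (v : V) (hvs : G.Adj v (s v)) (hvt : G.Adj v (t v))
    (o : Fin 10 → V) (ho : o = ![v, s v, s (t v), s (t (s v)), s (t (s (t v))), s (t (s (t (s v)))), s (t (s (t (s (t v))))), s (t (s (t (s (t (s v)))))), s (t (s (t (s (t (s (t v))))))), s (t (s (t (s (t (s (t (s v))))))))])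
    (hchordless : ∀ i j : Fin 10, i ≠ j → j ≠ i + 1 → i ≠ j + 1 → ¬ G.Adj (o i) (o j))
    (w : V)
    (hyp : ∃ i : Fin 10, ∀ m : ℕ, m < 5 → G.Adj w (o (i + (m : Fin 10)))) :
    ∃ u : V, ∃ i : Fin 10, ∀ m : ℕ, m < 6 → G.Adj u (o (i + (m : Fin 10))) := by
  obtain ⟨i, hw⟩ := hyp
  have hr : ∀ k, (s * t) (o k) = o (k + 2) := by
    intro k
    fin_cases k <;> simp [ho, RelIso.mul_apply, hst5]
  have hr5 : (s * t) ^ 5 = 1 := RelIso.ext fun z => by simp [pow_succ, RelIso.mul_apply, hst5]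
  have hO : IsChordlessTenCycle G o := isChordlessTenCycle_of_rotation (s * t) hr
    (by simpa [ho] using hvs) (by simpa [ho] using s.map_adj_iff.mpr hvt) hchordless
  exact hO.exists_adjArc_six hchord4 hchord5 (s * t) hr hr5 hw

theorem stmt14 {V : Type*} (G : SimpleGraph V)
    (hchord4 : ∀ w1 w2 w3 w4 : V, G.Adj w1 w2 → G.Adj w2 w3 → G.Adj w3 w4 →
      G.Adj w4 w1 → w1 ≠ w3 → w2 ≠ w4 → G.Adj w1 w3 ∨ G.Adj w2 w4)
    (hchord5 : ∀ w1 w2 w3 w4 w5 : V,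
      ([w1, w2, w3, w4, w5] : List V).Pairwise (· ≠ ·) →
      G.Adj w1 w2 → G.Adj w2 w3 → G.Adj w3 w4 → G.Adj w4 w5 → G.Adj w5 w1 →
      G.Adj w1 w3 ∨ G.Adj w2 w4 ∨ G.Adj w3 w5 ∨ G.Adj w4 w1 ∨ G.Adj w5 w2)
    (s t : G ≃g G)
    (hss : ∀ z, s (s z) = z) (htt : ∀ z, t (t z) = z)
    (hst5 : ∀ z : V, s (t (s (t (s (t (s (t (s (t (z)))))))))) = z)
    (v : V) (hvs : G.Adj v (s v)) (hvt : G.Adj v (t v))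
    (hdist : ([v, s v, s (t v), s (t (s v)), s (t (s (t v))), s (t (s (t (s v)))), s (t (s (t (s (t v))))), s (t (s (t (s (t (s v)))))), s (t (s (t (s (t (s (t v))))))), s (t (s (t (s (t (s (t (s v))))))))] : List V).Pairwise (· ≠ ·))
    (o : Fin 10 → V) (ho : o = ![v, s v, s (t v), s (t (s v)), s (t (s (t v))), s (t (s (t (s v)))), s (t (s (t (s (t v))))), s (t (s (t (s (t (s v)))))), s (t (s (t (s (t (s (t v))))))), s (t (s (t (s (t (s (t (s v))))))))])
    (hchordless : ∀ i j : Fin 10, i ≠ j → j ≠ i + 1 → i ≠ j + 1 → ¬ G.Adj (o i) (o j))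
    (w : V) (hworbit : ([w, s w, s (t w), s (t (s w)), s (t (s (t w))), s (t (s (t (s w)))), s (t (s (t (s (t w))))), s (t (s (t (s (t (s w)))))), s (t (s (t (s (t (s (t w))))))), s (t (s (t (s (t (s (t (s w))))))))] : List V).Pairwise (· ≠ ·))
    (hyp : ∃ i : Fin 10, ∀ m : ℕ, m < 5 → G.Adj w (o (i + (m : Fin 10)))) :
    ∃ u : V, ∃ i : Fin 10, ∀ m : ℕ, m < 6 → G.Adj u (o (i + (m : Fin 10))) :=
  stmt14_general G hchord4 hchord5 s t hst5 v hvs hvt o ho hchordless w hyp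
end

section
/- Assume G has the 4-cycle chord property and the 5-cycle chord property, the 10-cycle O is chordless, and w is a vertex of G whose images under the ten elements of the dihedral group generated by s and t are pairwise distinct. If w is adjacent to 6 consecutive vertices of O, then w is adjacent to 7 consecutive vertices of O. -/
/-!
Let `R = s * t`; it rotates `O` by two steps and `R ^ 5 = 1`. Say `w` is adjacent to
`o 0, …, o 5`. The 4-cycle `w, o 2, R w, o 5` cannot use the chord `o 2 o 5`, so `w ∼ R w`.
Then the 5-cycle `w, R w, …, R⁴ w` has a chord, and each of its chords is a rotation of
`w ∼ R² w`. Finally the 4-cycle `w, o 0, o 9, R² w` gives `w ∼ o 9` or `o 0 ∼ R² w`; rotating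
the latter by `R³` gives `w ∼ o 6`. Either way the run of neighbours of `w` grows to seven.
-/

open Fin.NatCast

namespace SimpleGraph

variable {V : Type*} {G : SimpleGraph V}

def FourCyclesHaveChords (G : SimpleGraph V) : Prop :=
  ∀ w1 w2 w3 w4 : V, G.Adj w1 w2 → G.Adj w2 w3 → G.Adj w3 w4 →
    G.Adj w4 w1 → w1 ≠ w3 → w2 ≠ w4 → G.Adj w1 w3 ∨ G.Adj w2 w4

def FiveCyclesHaveChords (G : SimpleGraph V) : Prop :=
  ∀ w1 w2 w3 w4 w5 : V, ([w1, w2, w3, w4, w5] : List V).Pairwise (· ≠ ·) →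
    G.Adj w1 w2 → G.Adj w2 w3 → G.Adj w3 w4 → G.Adj w4 w5 → G.Adj w5 w1 →
    G.Adj w1 w3 ∨ G.Adj w2 w4 ∨ G.Adj w3 w5 ∨ G.Adj w4 w1 ∨ G.Adj w5 w2

theorem Iso.adj_pow_mod_of_adj {R : G ≃g G} {n : ℕ} (hR : R ^ n = 1) (k : ℕ) {a b : ℕ} {w : V}
    (h : G.Adj ((R ^ a) w) ((R ^ b) w)) :
    G.Adj ((R ^ ((k + a) % n)) w) ((R ^ ((k + b) % n)) w) := by
  rw [← pow_eq_pow_mod _ hR, ← pow_eq_pow_mod _ hR, pow_add, pow_add, RelIso.mul_apply,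
    RelIso.mul_apply]
  exact (R ^ k).map_adj_iff.2 h

theorem FiveCyclesHaveChords.adj_pow_two {R : G ≃g G} (h5 : G.FiveCyclesHaveChords)
    (hR : R ^ 5 = 1) {w : V} (hw : [w, R w, (R ^ 2) w, (R ^ 3) w, (R ^ 4) w].Pairwise (· ≠ ·))
    (hadj : G.Adj w (R w)) : G.Adj w ((R ^ 2) w) := by
  have hadj' : G.Adj ((R ^ 0) w) ((R ^ 1) w) := hadj
  rcases h5 _ _ _ _ _ hw hadj (Iso.adj_pow_mod_of_adj hR 1 hadj')
      (Iso.adj_pow_mod_of_adj hR 2 hadj') (Iso.adj_pow_mod_of_adj hR 3 hadj')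
      (Iso.adj_pow_mod_of_adj hR 4 hadj') with h | h | h | h | h
  · exact h
  · exact Iso.adj_pow_mod_of_adj hR 4 (a := 1) (b := 3) h
  · exact Iso.adj_pow_mod_of_adj hR 3 (a := 2) (b := 4) h
  · exact Iso.adj_pow_mod_of_adj hR 2 (a := 3) (b := 0) h
  · exact Iso.adj_pow_mod_of_adj hR 1 (a := 4) (b := 1) h

structure RotatesChordlessDecagon (R : G ≃g G) (o : Fin 10 → V) : Prop where
  adj_succ : ∀ j, G.Adj (o j) (o (j + 1))
  not_adj : ∀ i j, i ≠ j → j ≠ i + 1 → i ≠ j + 1 → ¬ G.Adj (o i) (o j)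
  apply_eq : ∀ j, R (o j) = o (j + 2)

namespace RotatesChordlessDecagon

variable {R : G ≃g G} {o : Fin 10 → V}

theorem reindex (h : RotatesChordlessDecagon R o) (i : Fin 10) :
    RotatesChordlessDecagon R (fun j => o (i + j)) where
  adj_succ j := by simpa only [add_assoc] using h.adj_succ (i + j)
  not_adj a b hab h1 h2 := by
    refine h.not_adj (i + a) (i + b) (fun he => hab (add_left_cancel he)) (fun he => h1 ?_)
      (fun he => h2 ?_) <;> exact add_left_cancel (by rwa [add_assoc] at he)
  apply_eq j := by rw [h.apply_eq, add_assoc]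

theorem pow_apply (h : RotatesChordlessDecagon R o) (k : ℕ) (j : Fin 10) :
    (R ^ k) (o j) = o (j + (2 * k : ℕ)) := by
  induction k with
  | zero => simp
  | succ k ih => rw [pow_succ', RelIso.mul_apply, ih, h.apply_eq, Nat.mul_succ, Nat.cast_add,
      Nat.cast_ofNat, add_assoc]

theorem adj_pow_apply (h : RotatesChordlessDecagon R o) (k : ℕ) {w : V} {j : Fin 10}
    (hw : G.Adj w (o j)) : G.Adj ((R ^ k) w) (o (j + (2 * k : ℕ))) := by
  rw [← h.pow_apply]
  exact (R ^ k).map_adj_iff.2 hw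

theorem adj_apply_of_adj_six (h : RotatesChordlessDecagon R o) (h4 : G.FourCyclesHaveChords)
    {w : V} (hne : w ≠ R w) (hw : ∀ m : ℕ, m < 6 → G.Adj w (o m)) : G.Adj w (R w) := by
  have hw2 : G.Adj w (o 2) := by simpa using hw 2 (by norm_num)
  have hw5 : G.Adj w (o 5) := by simpa using hw 5 (by norm_num)
  have hRw2 : G.Adj (R w) (o 2) := by simpa using h.adj_pow_apply 1 (hw 0 (by norm_num))
  have hRw5 : G.Adj (R w) (o 5) := by simpa using h.adj_pow_apply 1 (hw 3 (by norm_num))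
  have h25 : ¬ G.Adj (o 2) (o 5) := h.not_adj 2 5 (by decide) (by decide) (by decide)
  have hne25 : o 2 ≠ o 5 := fun he =>
    h.not_adj 5 3 (by decide) (by decide) (by decide) (he ▸ (h.adj_succ 2) : G.Adj (o 5) (o 3))
  exact (h4 _ _ _ _ hw2 hRw2.symm hRw5 hw5.symm hne hne25).resolve_right h25

theorem adj_nine_or_six (h : RotatesChordlessDecagon R o) (h4 : G.FourCyclesHaveChords)
    (hR : R ^ 5 = 1) {w : V} (hw : ∀ m : ℕ, m < 6 → G.Adj w (o m))
    (hsq : G.Adj w ((R ^ 2) w)) : G.Adj w (o 9) ∨ G.Adj w (o 6) := by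
  have hw0 : G.Adj w (o 0) := by simpa using hw 0 (by norm_num)
  have hw1 : G.Adj w (o 1) := by simpa using hw 1 (by norm_num)
  have hw2 : G.Adj w (o 2) := by simpa using hw 2 (by norm_num)
  have hw5 : G.Adj w (o 5) := by simpa using hw 5 (by norm_num)
  have hR2w9 : G.Adj ((R ^ 2) w) (o 9) := by simpa using h.adj_pow_apply 2 hw5
  have hR2w6 : G.Adj ((R ^ 2) w) (o 6) := by simpa using h.adj_pow_apply 2 hw2
  have hne9 : w ≠ o 9 := fun he =>
    h.not_adj 9 1 (by decide) (by decide) (by decide) (he ▸ hw1)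
  have hne0 : o 0 ≠ (R ^ 2) w := fun he =>
    h.not_adj 0 6 (by decide) (by decide) (by decide) (he ▸ hR2w6)
  refine (h4 _ _ _ _ hw0 (h.adj_succ 9).symm hR2w9.symm hsq.symm hne9 hne0).imp id fun h06 => ?_
  have h6 := h.adj_pow_apply 3 h06.symm
  rw [← RelIso.mul_apply, ← pow_add, hR, RelIso.one_apply] at h6
  simpa using h6

theorem exists_adj_seven (h : RotatesChordlessDecagon R o) (h4 : G.FourCyclesHaveChords)
    (h5 : G.FiveCyclesHaveChords) (hR : R ^ 5 = 1) {w : V}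
    (horbit : [w, R w, (R ^ 2) w, (R ^ 3) w, (R ^ 4) w].Pairwise (· ≠ ·)) {i : Fin 10}
    (hw : ∀ m : ℕ, m < 6 → G.Adj w (o (i + m))) :
    ∃ i : Fin 10, ∀ m : ℕ, m < 7 → G.Adj w (o (i + m)) := by
  have hi := h.reindex i
  have hne : w ≠ R w := (List.pairwise_cons.1 horbit).1 (R w) (by simp)
  have hsq := h5.adj_pow_two hR horbit (hi.adj_apply_of_adj_six h4 hne hw)
  rcases hi.adj_nine_or_six h4 hR hw hsq with h9 | h6
  · refine ⟨i + 9, Nat.forall_lt_succ_left.2 ⟨by simpa using h9, fun m hm => ?_⟩⟩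
    have hshift : i + 9 + ((m + 1 : ℕ) : Fin 10) = i + m := by
      rw [Nat.cast_succ, add_comm (m : Fin 10), ← add_assoc, add_assoc i,
        show (9 : Fin 10) + 1 = 0 from rfl, add_zero]
    rw [hshift]
    exact hw m hm
  · exact ⟨i, Nat.forall_lt_succ_right.2 ⟨hw, h6⟩⟩

end RotatesChordlessDecagon

end SimpleGraph

open Fin.NatCast in
theorem stmt15_general {V : Type*} (G : SimpleGraph V)
    (hchord4 : ∀ w1 w2 w3 w4 : V, G.Adj w1 w2 → G.Adj w2 w3 → G.Adj w3 w4 →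
      G.Adj w4 w1 → w1 ≠ w3 → w2 ≠ w4 → G.Adj w1 w3 ∨ G.Adj w2 w4)
    (hchord5 : ∀ w1 w2 w3 w4 w5 : V,
      ([w1, w2, w3, w4, w5] : List V).Pairwise (· ≠ ·) →
      G.Adj w1 w2 → G.Adj w2 w3 → G.Adj w3 w4 → G.Adj w4 w5 → G.Adj w5 w1 →
      G.Adj w1 w3 ∨ G.Adj w2 w4 ∨ G.Adj w3 w5 ∨ G.Adj w4 w1 ∨ G.Adj w5 w2)
    (s t : G ≃g G)
    (hst5 : ∀ z : V, s (t (s (t (s (t (s (t (s (t (z)))))))))) = z)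
    (v : V) (hvs : G.Adj v (s v)) (hvt : G.Adj v (t v))
    (o : Fin 10 → V) (ho : o = ![v, s v, s (t v), s (t (s v)), s (t (s (t v))), s (t (s (t (s v)))), s (t (s (t (s (t v))))), s (t (s (t (s (t (s v)))))), s (t (s (t (s (t (s (t v))))))), s (t (s (t (s (t (s (t (s v))))))))])
    (hchordless : ∀ i j : Fin 10, i ≠ j → j ≠ i + 1 → i ≠ j + 1 → ¬ G.Adj (o i) (o j))
    (w : V) (hworbit : ([w, s w, s (t w), s (t (s w)), s (t (s (t w))), s (t (s (t (s w)))), s (t (s (t (s (t w))))), s (t (s (t (s (t (s w)))))), s (t (s (t (s (t (s (t w))))))), s (t (s (t (s (t (s (t (s w))))))))] : List V).Pairwise (· ≠ ·))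
    (hyp : ∃ i : Fin 10, ∀ m : ℕ, m < 6 → G.Adj w (o (i + (m : Fin 10)))) :
    ∃ i : Fin 10, ∀ m : ℕ, m < 7 → G.Adj w (o (i + (m : Fin 10))) := by
  obtain ⟨i, hw⟩ := hyp
  have hR : (s * t) ^ 5 = 1 := RelIso.ext hst5
  have hcycle : SimpleGraph.RotatesChordlessDecagon (s * t) o := by
    subst ho
    refine ⟨fun j => ?_, hchordless, fun j => ?_⟩
    · fin_cases j <;> try simp [SimpleGraph.Iso.map_adj_iff, hvs, hvt]
      -- the closing edge `o 9 ∼ o 0`, after writing `v` as `(s * t) ^ 5` applied to `v`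
      conv_rhs => rw [← hst5 v]
      simp [SimpleGraph.Iso.map_adj_iff, hvt]
    · fin_cases j <;> first | rfl | exact hst5 _
  have horbit :
      [w, (s * t) w, ((s * t) ^ 2) w, ((s * t) ^ 3) w, ((s * t) ^ 4) w].Pairwise (· ≠ ·) :=
    hworbit.sublist <| .cons_cons _ <| .cons _ <| .cons_cons _ <| .cons _ <| .cons_cons _ <|
      .cons _ <| .cons_cons _ <| .cons _ <| .cons_cons _ <| .cons _ .slnil
  exact hcycle.exists_adj_seven hchord4 hchord5 hR horbit hw

open Fin.NatCast in
theorem stmt15 {V : Type*} (G : SimpleGraph V)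
    (hchord4 : ∀ w1 w2 w3 w4 : V, G.Adj w1 w2 → G.Adj w2 w3 → G.Adj w3 w4 →
      G.Adj w4 w1 → w1 ≠ w3 → w2 ≠ w4 → G.Adj w1 w3 ∨ G.Adj w2 w4)
    (hchord5 : ∀ w1 w2 w3 w4 w5 : V,
      ([w1, w2, w3, w4, w5] : List V).Pairwise (· ≠ ·) →
      G.Adj w1 w2 → G.Adj w2 w3 → G.Adj w3 w4 → G.Adj w4 w5 → G.Adj w5 w1 →
      G.Adj w1 w3 ∨ G.Adj w2 w4 ∨ G.Adj w3 w5 ∨ G.Adj w4 w1 ∨ G.Adj w5 w2)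
    (s t : G ≃g G)
    (hss : ∀ z, s (s z) = z) (htt : ∀ z, t (t z) = z)
    (hst5 : ∀ z : V, s (t (s (t (s (t (s (t (s (t (z)))))))))) = z)
    (v : V) (hvs : G.Adj v (s v)) (hvt : G.Adj v (t v))
    (hdist : ([v, s v, s (t v), s (t (s v)), s (t (s (t v))), s (t (s (t (s v)))), s (t (s (t (s (t v))))), s (t (s (t (s (t (s v)))))), s (t (s (t (s (t (s (t v))))))), s (t (s (t (s (t (s (t (s v))))))))] : List V).Pairwise (· ≠ ·))
    (o : Fin 10 → V) (ho : o = ![v, s v, s (t v), s (t (s v)), s (t (s (t v))), s (t (s (t (s v)))), s (t (s (t (s (t v))))), s (t (s (t (s (t (s v)))))), s (t (s (t (s (t (s (t v))))))), s (t (s (t (s (t (s (t (s v))))))))])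
    (hchordless : ∀ i j : Fin 10, i ≠ j → j ≠ i + 1 → i ≠ j + 1 → ¬ G.Adj (o i) (o j))
    (w : V) (hworbit : ([w, s w, s (t w), s (t (s w)), s (t (s (t w))), s (t (s (t (s w)))), s (t (s (t (s (t w))))), s (t (s (t (s (t (s w)))))), s (t (s (t (s (t (s (t w))))))), s (t (s (t (s (t (s (t (s w))))))))] : List V).Pairwise (· ≠ ·))
    (hyp : ∃ i : Fin 10, ∀ m : ℕ, m < 6 → G.Adj w (o (i + (m : Fin 10)))) :
    ∃ i : Fin 10, ∀ m : ℕ, m < 7 → G.Adj w (o (i + (m : Fin 10))) :=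
  stmt15_general G hchord4 hchord5 s t hst5 v hvs hvt o ho hchordless w hworbit hyp
end

section
/- Assume G has the 4-cycle chord property and the 5-cycle chord property, the 10-cycle O is chordless, and w is a vertex of G whose images under the ten elements of the dihedral group generated by s and t are pairwise distinct. If w is adjacent to 7 consecutive vertices of O, then w is adjacent to 8 consecutive vertices of O. -/
/-!
Let `φ = s ∘ t`, which rotates `O` by two positions, and suppose (after a cyclic
relabelling) that `w` is adjacent to `o₀, …, o₆` but to neither `o₇` nor `o₉` (either would
extend the run to eight). The vertex `z = φ⁻¹ w` is adjacent to `o₈, o₉, o₀, …, o₄`; since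
`z ~ o₉` we have `z ≠ w`, and the 4-cycle `w o₁ z o₃` forces `w ~ z`. The 4-cycle
`w o₆ o₇ o₈` rules out `w ~ o₈`. Now the 5-cycle `w o₆ o₇ o₈ z` has no chord: `o₆ ~ o₈` is
excluded as `O` is chordless, and `o₇ ~ z`, `z ~ o₆` would translate under `φ` into `w ~ o₉`,
`w ~ o₈`.
-/

open Fin.NatCast

theorem Fin.forall_of_add_two {n : ℕ} [NeZero n] {P : Fin n → Prop} (h0 : P 0) (h1 : P 1)
    (h : ∀ k, P k → P (k + 2)) (k : Fin n) : P k := by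
  have hnat : ∀ m : ℕ, P m := by
    intro m
    induction m using Nat.twoStepInduction with
    | zero => simpa using h0
    | one => simpa using h1
    | more m ih _ => simpa [add_assoc] using h _ ih
  simpa using hnat k

namespace SimpleGraph

variable {V : Type*} (G : SimpleGraph V)

def HasChordedFourCycles : Prop :=
  ∀ w1 w2 w3 w4 : V, G.Adj w1 w2 → G.Adj w2 w3 → G.Adj w3 w4 → G.Adj w4 w1 →
    w1 ≠ w3 → w2 ≠ w4 → G.Adj w1 w3 ∨ G.Adj w2 w4

def HasChordedFiveCycles : Prop :=
  ∀ w1 w2 w3 w4 w5 : V, ([w1, w2, w3, w4, w5] : List V).Pairwise (· ≠ ·) →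
    G.Adj w1 w2 → G.Adj w2 w3 → G.Adj w3 w4 → G.Adj w4 w5 → G.Adj w5 w1 →
    G.Adj w1 w3 ∨ G.Adj w2 w4 ∨ G.Adj w3 w5 ∨ G.Adj w4 w1 ∨ G.Adj w5 w2

structure IsChordlessCycle {n : ℕ} [NeZero n] (o : Fin n → V) : Prop where
  adj_add_one : ∀ k, G.Adj (o k) (o (k + 1))
  not_adj : ∀ i j, i ≠ j → j ≠ i + 1 → i ≠ j + 1 → ¬ G.Adj (o i) (o j)

def AdjConsecutive {n : ℕ} [NeZero n] (o : Fin n → V) (w : V) (k : ℕ) : Prop :=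
  ∃ i : Fin n, ∀ m < k, G.Adj w (o (i + m))

variable {G} {n : ℕ} [NeZero n]

theorem adj_add_one_of_map_eq_add_two {o : Fin n → V} (φ : G ≃g G)
    (hφ : ∀ k, φ (o k) = o (k + 2)) (h0 : G.Adj (o 0) (o 1)) (h1 : G.Adj (o 1) (o 2)) :
    ∀ k, G.Adj (o k) (o (k + 1)) := by
  refine Fin.forall_of_add_two (by simpa using h0) (by simpa [one_add_one_eq_two] using h1) ?_
  intro k hk
  rw [← hφ, add_right_comm, ← hφ]
  exact φ.map_adj_iff.mpr hk

theorem IsChordlessCycle.rotate {o : Fin n → V} (ho : G.IsChordlessCycle o) (i : Fin n) :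
    G.IsChordlessCycle fun k ↦ o (i + k) where
  adj_add_one k := by simpa [add_assoc] using ho.adj_add_one (i + k)
  not_adj a b hab h1 h2 := ho.not_adj (i + a) (i + b) (by simpa using hab)
    (by simpa [add_assoc] using h1) (by simpa [add_assoc] using h2)

theorem AdjConsecutive.of_rotate {o : Fin n → V} {i : Fin n} {w : V} {k : ℕ}
    (h : G.AdjConsecutive (fun k ↦ o (i + k)) w k) : G.AdjConsecutive o w k :=
  let ⟨j, hj⟩ := h
  ⟨i + j, fun m hm ↦ by simpa [add_assoc] using hj m hm⟩

theorem IsChordlessCycle.injective {o : Fin 10 → V} (ho : G.IsChordlessCycle o) :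
    Function.Injective o := by
  have key : ∀ a b, o a = o b → a ≠ b → b ≠ a + 1 → b ≠ a + 2 → False :=
    fun a b hab hne h1 h2 ↦ ho.not_adj (a + 1) b (Ne.symm h1) (by grind) (by grind)
      (hab ▸ (ho.adj_add_one a).symm)
  intro i j hij
  by_contra hne
  by_cases h1 : j = i + 1
  · exact (ho.adj_add_one i).ne (h1 ▸ hij)
  by_cases h1' : i = j + 1
  · exact (ho.adj_add_one j).ne (h1' ▸ hij.symm)
  by_cases h2 : j = i + 2
  · exact key j i hij.symm (Ne.symm hne) h1' (by grind)
  · exact key i j hij hne h1 h2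

theorem IsChordlessCycle.adj_seven_or_adj_nine (h4 : G.HasChordedFourCycles)
    (h5 : G.HasChordedFiveCycles) {o : Fin 10 → V} (ho : G.IsChordlessCycle o) (φ : G ≃g G)
    (hφ : ∀ k, φ (o k) = o (k + 2)) {w : V} (a0 : G.Adj w (o 0)) (a1 : G.Adj w (o 1))
    (a3 : G.Adj w (o 3)) (a5 : G.Adj w (o 5)) (a6 : G.Adj w (o 6)) :
    G.Adj w (o 7) ∨ G.Adj w (o 9) := by
  by_contra! ⟨h7, h9⟩
  have hnot (i j : Fin 10) (hij : i ≠ j ∧ j ≠ i + 1 ∧ i ≠ j + 1) : ¬ G.Adj (o i) (o j) :=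
    ho.not_adj i j hij.1 hij.2.1 hij.2.2
  have hne (i j : Fin 10) (hij : i ≠ j := by decide) : o i ≠ o j := ho.injective.ne hij
  set z := φ.symm w
  have hz (k : Fin 10) : G.Adj z (o k) ↔ G.Adj w (o (k + 2)) := by
    rw [← hφ, ← φ.map_adj_iff, φ.apply_symm_apply]
  have hz1 : G.Adj z (o 1) := (hz 1).mpr a3
  have hz8 : G.Adj z (o 8) := (hz 8).mpr a0
  have hwz_ne : w ≠ z := fun h ↦ h9 (h ▸ (hz 9).mpr a1)
  have hw7_ne : w ≠ o 7 := fun h ↦ hnot 7 1 (by decide) (h ▸ a1)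
  have hwz : G.Adj w z :=
    (h4 w (o 1) z (o 3) a1 hz1.symm ((hz 3).mpr a5) a3.symm hwz_ne (hne 1 3)).resolve_right
      (hnot 1 3 (by decide))
  have h8 : ¬ G.Adj w (o 8) := fun h8 ↦
    (h4 w (o 6) (o 7) (o 8) a6 (ho.adj_add_one 6) (ho.adj_add_one 7) h8.symm hw7_ne
      (hne 6 8)).elim h7 (hnot 6 8 (by decide))
  have hpairwise : [w, o 6, o 7, o 8, z].Pairwise (· ≠ ·) := by
    simp only [List.pairwise_cons, List.mem_cons, List.not_mem_nil, or_false, forall_eq_or_imp,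
      forall_eq, false_implies, implies_true, List.Pairwise.nil, and_true]
    exact ⟨⟨a6.ne, hw7_ne, fun h ↦ hnot 8 6 (by decide) (h ▸ a6), hwz_ne⟩,
      ⟨hne 6 7, hne 6 8, fun h ↦ hnot 6 8 (by decide) (h ▸ hz8)⟩,
      ⟨hne 7 8, fun h ↦ hnot 7 1 (by decide) (h ▸ hz1)⟩, hz8.ne'⟩
  rcases h5 w (o 6) (o 7) (o 8) z hpairwise a6 (ho.adj_add_one 6) (ho.adj_add_one 7) hz8.symm
    hwz.symm with h | h | h | h | h
  · exact h7 h
  · exact hnot 6 8 (by decide) h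
  · exact h9 ((hz 7).mp h.symm)
  · exact h8 h.symm
  · exact h8 ((hz 6).mp h)

theorem IsChordlessCycle.adjConsecutive_eight_of_forall_lt_seven (h4 : G.HasChordedFourCycles)
    (h5 : G.HasChordedFiveCycles) {o : Fin 10 → V} (ho : G.IsChordlessCycle o) (φ : G ≃g G)
    (hφ : ∀ k, φ (o k) = o (k + 2)) {w : V} (hw : ∀ m : ℕ, m < 7 → G.Adj w (o m)) :
    G.AdjConsecutive o w 8 := by
  have hw' (k : Fin 10) (hk : k.val < 7 := by decide) : G.Adj w (o k) := by
    simpa using hw k hk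
  obtain ⟨a0, a1, a2, a3, a4, a5, a6⟩ : G.Adj w (o 0) ∧ G.Adj w (o 1) ∧ G.Adj w (o 2) ∧
      G.Adj w (o 3) ∧ G.Adj w (o 4) ∧ G.Adj w (o 5) ∧ G.Adj w (o 6) :=
    ⟨hw' 0, hw' 1, hw' 2, hw' 3, hw' 4, hw' 5, hw' 6⟩
  rcases ho.adj_seven_or_adj_nine h4 h5 φ hφ a0 a1 a3 a5 a6 with h7 | h9
  · refine ⟨0, fun m hm ↦ ?_⟩
    interval_cases m
    exacts [a0, a1, a2, a3, a4, a5, a6, h7]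
  · refine ⟨9, fun m hm ↦ ?_⟩
    interval_cases m
    exacts [h9, a0, a1, a2, a3, a4, a5, a6]

theorem IsChordlessCycle.adjConsecutive_eight_of_seven (h4 : G.HasChordedFourCycles)
    (h5 : G.HasChordedFiveCycles) {o : Fin 10 → V} (ho : G.IsChordlessCycle o) (φ : G ≃g G)
    (hφ : ∀ k, φ (o k) = o (k + 2)) {w : V} (hw : G.AdjConsecutive o w 7) :
    G.AdjConsecutive o w 8 :=
  let ⟨i, hi⟩ := hw
  .of_rotate <| (ho.rotate i).adjConsecutive_eight_of_forall_lt_seven h4 h5 φ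
    (fun k ↦ by simp only [hφ, add_assoc]) hi

end SimpleGraph

theorem stmt16_general {V : Type*} (G : SimpleGraph V)
    (hchord4 : ∀ w1 w2 w3 w4 : V, G.Adj w1 w2 → G.Adj w2 w3 → G.Adj w3 w4 →
      G.Adj w4 w1 → w1 ≠ w3 → w2 ≠ w4 → G.Adj w1 w3 ∨ G.Adj w2 w4)
    (hchord5 : ∀ w1 w2 w3 w4 w5 : V,
      ([w1, w2, w3, w4, w5] : List V).Pairwise (· ≠ ·) →
      G.Adj w1 w2 → G.Adj w2 w3 → G.Adj w3 w4 → G.Adj w4 w5 → G.Adj w5 w1 →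
      G.Adj w1 w3 ∨ G.Adj w2 w4 ∨ G.Adj w3 w5 ∨ G.Adj w4 w1 ∨ G.Adj w5 w2)
    (s t : G ≃g G)
    (hst5 : ∀ z : V, s (t (s (t (s (t (s (t (s (t (z)))))))))) = z)
    (v : V) (hvs : G.Adj v (s v)) (hvt : G.Adj v (t v))
    (o : Fin 10 → V) (ho : o = ![v, s v, s (t v), s (t (s v)), s (t (s (t v))), s (t (s (t (s v)))), s (t (s (t (s (t v))))), s (t (s (t (s (t (s v)))))), s (t (s (t (s (t (s (t v))))))), s (t (s (t (s (t (s (t (s v))))))))])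
    (hchordless : ∀ i j : Fin 10, i ≠ j → j ≠ i + 1 → i ≠ j + 1 → ¬ G.Adj (o i) (o j))
    (w : V)
    (hyp : ∃ i : Fin 10, ∀ m : ℕ, m < 7 → G.Adj w (o (i + (m : Fin 10)))) :
    ∃ i : Fin 10, ∀ m : ℕ, m < 8 → G.Adj w (o (i + (m : Fin 10))) := by
  have hrot : ∀ k, (t.trans s) (o k) = o (k + 2) := by
    subst ho
    intro k
    fin_cases k <;> simp [hst5]
  have hcycle : G.IsChordlessCycle o :=
    ⟨SimpleGraph.adj_add_one_of_map_eq_add_two (t.trans s) hrot (by simpa [ho] using hvs)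
      (by simpa [ho] using s.map_adj_iff.mpr hvt), hchordless⟩
  exact hcycle.adjConsecutive_eight_of_seven hchord4 hchord5 (t.trans s) hrot hyp

theorem stmt16 {V : Type*} (G : SimpleGraph V)
    (hchord4 : ∀ w1 w2 w3 w4 : V, G.Adj w1 w2 → G.Adj w2 w3 → G.Adj w3 w4 →
      G.Adj w4 w1 → w1 ≠ w3 → w2 ≠ w4 → G.Adj w1 w3 ∨ G.Adj w2 w4)
    (hchord5 : ∀ w1 w2 w3 w4 w5 : V,
      ([w1, w2, w3, w4, w5] : List V).Pairwise (· ≠ ·) →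
      G.Adj w1 w2 → G.Adj w2 w3 → G.Adj w3 w4 → G.Adj w4 w5 → G.Adj w5 w1 →
      G.Adj w1 w3 ∨ G.Adj w2 w4 ∨ G.Adj w3 w5 ∨ G.Adj w4 w1 ∨ G.Adj w5 w2)
    (s t : G ≃g G)
    (hss : ∀ z, s (s z) = z) (htt : ∀ z, t (t z) = z)
    (hst5 : ∀ z : V, s (t (s (t (s (t (s (t (s (t (z)))))))))) = z)
    (v : V) (hvs : G.Adj v (s v)) (hvt : G.Adj v (t v))
    (hdist : ([v, s v, s (t v), s (t (s v)), s (t (s (t v))), s (t (s (t (s v)))), s (t (s (t (s (t v))))), s (t (s (t (s (t (s v)))))), s (t (s (t (s (t (s (t v))))))), s (t (s (t (s (t (s (t (s v))))))))] : List V).Pairwise (· ≠ ·))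
    (o : Fin 10 → V) (ho : o = ![v, s v, s (t v), s (t (s v)), s (t (s (t v))), s (t (s (t (s v)))), s (t (s (t (s (t v))))), s (t (s (t (s (t (s v)))))), s (t (s (t (s (t (s (t v))))))), s (t (s (t (s (t (s (t (s v))))))))])
    (hchordless : ∀ i j : Fin 10, i ≠ j → j ≠ i + 1 → i ≠ j + 1 → ¬ G.Adj (o i) (o j))
    (w : V) (hworbit : ([w, s w, s (t w), s (t (s w)), s (t (s (t w))), s (t (s (t (s w)))), s (t (s (t (s (t w))))), s (t (s (t (s (t (s w)))))), s (t (s (t (s (t (s (t w))))))), s (t (s (t (s (t (s (t (s w))))))))] : List V).Pairwise (· ≠ ·))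
    (hyp : ∃ i : Fin 10, ∀ m : ℕ, m < 7 → G.Adj w (o (i + (m : Fin 10)))) :
    ∃ i : Fin 10, ∀ m : ℕ, m < 8 → G.Adj w (o (i + (m : Fin 10))) :=
  stmt16_general G hchord4 hchord5 s t hst5 v hvs hvt o ho hchordless w hyp
end

section
/- Assume G has the 4-cycle chord property and the 5-cycle chord property, the 10-cycle O is chordless, and w is a vertex of G whose images under the ten elements of the dihedral group generated by s and t are pairwise distinct. If w is adjacent to 8 consecutive vertices of O, then w is adjacent to every vertex of O. -/
/-!
A vertex `w` adjacent to both ends of an induced path `a - b - c - d` is adjacent to `b` and `c`: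
the 5-cycle `w a b c d` has a chord, which can only be `wb` or `wc`, and the 4-cycle that chord
cuts off forces the other one. If `w` sees eight consecutive vertices of the chordless 10-cycle,
the two vertices it might miss are the interior of such a path.
-/

namespace SimpleGraph

variable {V : Type*} {G : SimpleGraph V}

def HasFourCycleChordProperty (G : SimpleGraph V) : Prop :=
  ∀ w1 w2 w3 w4 : V, G.Adj w1 w2 → G.Adj w2 w3 → G.Adj w3 w4 →
    G.Adj w4 w1 → w1 ≠ w3 → w2 ≠ w4 → G.Adj w1 w3 ∨ G.Adj w2 w4

def HasFiveCycleChordProperty (G : SimpleGraph V) : Prop :=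
  ∀ w1 w2 w3 w4 w5 : V,
    ([w1, w2, w3, w4, w5] : List V).Pairwise (· ≠ ·) →
    G.Adj w1 w2 → G.Adj w2 w3 → G.Adj w3 w4 → G.Adj w4 w5 → G.Adj w5 w1 →
    G.Adj w1 w3 ∨ G.Adj w2 w4 ∨ G.Adj w3 w5 ∨ G.Adj w4 w1 ∨ G.Adj w5 w2

theorem adj_of_adj_ends_of_induced_path (h4 : G.HasFourCycleChordProperty)
    (h5 : G.HasFiveCycleChordProperty) {w a b c d : V}
    (hab : G.Adj a b) (hbc : G.Adj b c) (hcd : G.Adj c d)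
    (hac : ¬ G.Adj a c) (hbd : ¬ G.Adj b d) (had : ¬ G.Adj a d)
    (hwa : G.Adj w a) (hwd : G.Adj w d) :
    G.Adj w b ∧ G.Adj w c := by
  have hwb : w ≠ b := by rintro rfl; exact hbd hwd
  have hwc : w ≠ c := by rintro rfl; exact hac hwa.symm
  have hac' : a ≠ c := by rintro rfl; exact had hcd
  have hbd' : b ≠ d := by rintro rfl; exact had hab
  have had' : a ≠ d := by rintro rfl; exact hac hcd.symm
  have hdistinct : ([w, a, b, c, d] : List V).Pairwise (· ≠ ·) := by
    simp only [List.pairwise_cons, List.mem_cons, List.not_mem_nil, or_false, forall_eq_or_imp,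
      forall_eq, List.Pairwise.nil, and_true, IsEmpty.forall_iff, implies_true]
    exact ⟨⟨hwa.ne, hwb, hwc, hwd.ne⟩, ⟨hab.ne, hac', had'⟩, ⟨hbc.ne, hbd'⟩, hcd.ne⟩
  rcases h5 w a b c d hdistinct hwa hab hbc hcd hwd.symm with h | h | h | h | h
  · exact ⟨h, (h4 w b c d h hbc hcd hwd.symm hwc hbd').resolve_right hbd⟩
  · exact absurd h hac
  · exact absurd h hbd
  · exact ⟨(h4 w a b c hwa hab hbc h hwb hac').resolve_right hac, h.symm⟩
  · exact absurd h.symm had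

theorem adj_of_adj_eight_consecutive_of_chordless (h4 : G.HasFourCycleChordProperty)
    (h5 : G.HasFiveCycleChordProperty) {o : Fin 10 → V}
    (hcycle : ∀ k, G.Adj (o k) (o (k + 1)))
    (hchordless : ∀ i j : Fin 10, i ≠ j → j ≠ i + 1 → i ≠ j + 1 → ¬ G.Adj (o i) (o j))
    {w : V} (hw : ∀ k : Fin 10, k.val < 8 → G.Adj w (o k)) (j : Fin 10) :
    G.Adj w (o j) := by
  obtain ⟨h8, h9⟩ := adj_of_adj_ends_of_induced_path h4 h5
    (hcycle 7) (hcycle 8) (hcycle 9)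
    (hchordless 7 9 (by decide) (by decide) (by decide))
    (hchordless 8 0 (by decide) (by decide) (by decide))
    (hchordless 7 0 (by decide) (by decide) (by decide))
    (hw 7 (by decide)) (hw 0 (by decide))
  by_cases hj : j.val < 8
  · exact hw j hj
  · obtain rfl | rfl : j = 8 ∨ j = 9 := by omega
    exacts [h8, h9]

end SimpleGraph

theorem stmt17_general {V : Type*} (G : SimpleGraph V)
    (hchord4 : ∀ w1 w2 w3 w4 : V, G.Adj w1 w2 → G.Adj w2 w3 → G.Adj w3 w4 →
      G.Adj w4 w1 → w1 ≠ w3 → w2 ≠ w4 → G.Adj w1 w3 ∨ G.Adj w2 w4)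
    (hchord5 : ∀ w1 w2 w3 w4 w5 : V,
      ([w1, w2, w3, w4, w5] : List V).Pairwise (· ≠ ·) →
      G.Adj w1 w2 → G.Adj w2 w3 → G.Adj w3 w4 → G.Adj w4 w5 → G.Adj w5 w1 →
      G.Adj w1 w3 ∨ G.Adj w2 w4 ∨ G.Adj w3 w5 ∨ G.Adj w4 w1 ∨ G.Adj w5 w2)
    (s t : G ≃g G)
    (hst5 : ∀ z : V, s (t (s (t (s (t (s (t (s (t (z)))))))))) = z)
    (v : V) (hvs : G.Adj v (s v)) (hvt : G.Adj v (t v))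
    (o : Fin 10 → V) (ho : o = ![v, s v, s (t v), s (t (s v)), s (t (s (t v))), s (t (s (t (s v)))), s (t (s (t (s (t v))))), s (t (s (t (s (t (s v)))))), s (t (s (t (s (t (s (t v))))))), s (t (s (t (s (t (s (t (s v))))))))])
    (hchordless : ∀ i j : Fin 10, i ≠ j → j ≠ i + 1 → i ≠ j + 1 → ¬ G.Adj (o i) (o j))
    (w : V)
    (hyp : ∃ i : Fin 10, ∀ m : ℕ, m < 8 → G.Adj w (o (i + Fin.ofNat 10 m))) :
    ∀ i : Fin 10, G.Adj w (o i) := by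
  have hcycle : ∀ k, G.Adj (o k) (o (k + 1)) := by
    have hclose : G.Adj (s (t (s (t (s (t (s (t (s v))))))))) v := by
      nth_rewrite 2 [← hst5 v]
      simpa [SimpleGraph.Iso.map_adj_iff] using hvt
    subst ho
    intro k
    fin_cases k <;> simpa [SimpleGraph.Iso.map_adj_iff]
  obtain ⟨i, hi⟩ := hyp
  intro j
  simpa using G.adj_of_adj_eight_consecutive_of_chordless (o := fun k => o (i + k))
    hchord4 hchord5 (fun k => by simpa [add_assoc] using hcycle (i + k))
    (fun a b hne hsucc hpred => hchordless (i + a) (i + b) (by simpa)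
      (by simpa [add_assoc]) (by simpa [add_assoc]))
    (fun k hk => by simpa using hi k hk) (j - i)

theorem stmt17 {V : Type*} (G : SimpleGraph V)
    (hchord4 : ∀ w1 w2 w3 w4 : V, G.Adj w1 w2 → G.Adj w2 w3 → G.Adj w3 w4 →
      G.Adj w4 w1 → w1 ≠ w3 → w2 ≠ w4 → G.Adj w1 w3 ∨ G.Adj w2 w4)
    (hchord5 : ∀ w1 w2 w3 w4 w5 : V,
      ([w1, w2, w3, w4, w5] : List V).Pairwise (· ≠ ·) →
      G.Adj w1 w2 → G.Adj w2 w3 → G.Adj w3 w4 → G.Adj w4 w5 → G.Adj w5 w1 →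
      G.Adj w1 w3 ∨ G.Adj w2 w4 ∨ G.Adj w3 w5 ∨ G.Adj w4 w1 ∨ G.Adj w5 w2)
    (s t : G ≃g G)
    (hss : ∀ z, s (s z) = z) (htt : ∀ z, t (t z) = z)
    (hst5 : ∀ z : V, s (t (s (t (s (t (s (t (s (t (z)))))))))) = z)
    (v : V) (hvs : G.Adj v (s v)) (hvt : G.Adj v (t v))
    (hdist : ([v, s v, s (t v), s (t (s v)), s (t (s (t v))), s (t (s (t (s v)))), s (t (s (t (s (t v))))), s (t (s (t (s (t (s v)))))), s (t (s (t (s (t (s (t v))))))), s (t (s (t (s (t (s (t (s v))))))))] : List V).Pairwise (· ≠ ·))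
    (o : Fin 10 → V) (ho : o = ![v, s v, s (t v), s (t (s v)), s (t (s (t v))), s (t (s (t (s v)))), s (t (s (t (s (t v))))), s (t (s (t (s (t (s v)))))), s (t (s (t (s (t (s (t v))))))), s (t (s (t (s (t (s (t (s v))))))))])
    (hchordless : ∀ i j : Fin 10, i ≠ j → j ≠ i + 1 → i ≠ j + 1 → ¬ G.Adj (o i) (o j))
    (w : V) (hworbit : ([w, s w, s (t w), s (t (s w)), s (t (s (t w))), s (t (s (t (s w)))), s (t (s (t (s (t w))))), s (t (s (t (s (t (s w)))))), s (t (s (t (s (t (s (t w))))))), s (t (s (t (s (t (s (t (s w))))))))] : List V).Pairwise (· ≠ ·))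
    (hyp : ∃ i : Fin 10, ∀ m : ℕ, m < 8 → G.Adj w (o (i + Fin.ofNat 10 m))) :
    ∀ i : Fin 10, G.Adj w (o i) :=
  stmt17_general G hchord4 hchord5 s t hst5 v hvs hvt o ho hchordless w hyp
end

section
/- Assume G has the 4-cycle chord property. Let r and t be automorphisms of G with r∘r = id, t∘t = id and r∘t = t∘r, and let v, w be vertices of G such that v is adjacent to r(w), v is adjacent to t(w), and the four vertices v, t(w), t(r(v)), r(w) are pairwise distinct. Then v is adjacent to t(r(v)), or w is adjacent to t(r(w)). -/
theorem stmt19 {V : Type*} (G : SimpleGraph V)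
    (hchord4 : ∀ w1 w2 w3 w4 : V, G.Adj w1 w2 → G.Adj w2 w3 → G.Adj w3 w4 →
      G.Adj w4 w1 → w1 ≠ w3 → w2 ≠ w4 → G.Adj w1 w3 ∨ G.Adj w2 w4)
    (r t : G ≃g G)
    (hrr : ∀ z, r (r z) = z) (htt : ∀ z, t (t z) = z)
    (hrt : ∀ z, r (t z) = t (r z))
    (v w : V) (hvr : G.Adj v (r w)) (hvt : G.Adj v (t w))
    (hdist : ([v, t w, t (r v), r w] : List V).Pairwise (· ≠ ·)) :
    G.Adj v (t (r v)) ∨ G.Adj w (t (r w)) := by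
  simp only [List.pairwise_cons, List.mem_cons] at hdist
  obtain ⟨h1, h2, _⟩ := hdist
  have hne13 : v ≠ t (r v) := h1 (t (r v)) (by simp)
  have hne24 : t w ≠ r w := h2 (r w) (by simp)
  have e2 : G.Adj (t w) (t (r v)) := by
    have h0 : G.Adj (r v) (r (r w)) := r.map_adj_iff.mpr hvr
    rw [hrr] at h0
    exact t.map_adj_iff.mpr h0.symm
  have e3 : G.Adj (t (r v)) (r w) := by
    have h0 : G.Adj (t v) (t (t w)) := t.map_adj_iff.mpr hvt
    rw [htt] at h0
    have h1 : G.Adj (r (t v)) (r w) := r.map_adj_iff.mpr h0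
    rw [hrt] at h1
    exact h1
  have := hchord4 v (t w) (t (r v)) (r w) hvt e2 e3 hvr.symm hne13 hne24
  rcases this with h | h
  · exact Or.inl h
  · right
    have h1 : G.Adj (t (t w)) (t (r w)) := t.map_adj_iff.mpr h
    rw [htt] at h1
    exact h1
end
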